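/- arXiv:2402.19211 — 7 statements merged into one kernel-verified Lean document; each statement's English description precedes it below -/
import Mathlib

section
/- Let q be even and let W be an n-dimensional GF(q)-subspace of the space of functions f : GF(q^n) → GF(q^n) with f(0) = 0, all of whose nonzero elements are o-permutations over GF(q^n). Then the evaluation map f ↦ f(1) is a bijection from W onto GF(q^n); in particular {f(1) : f ∈ W} = GF(q^n). -/
/-- An o-permutation over a field `F` (of even order): a function `f : F → F` with
`f 0 = 0`, `f 1 ≠ 0`, and such that for every `s : F` the map
`x ↦ (f (x + s) + f s) / x` is a permutation of `F \ {0}`. -/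
def IsOPerm (F : Type*) [Field F] (f : F → F) : Prop :=
  f 0 = 0 ∧ f 1 ≠ 0 ∧
  ∀ s : F, Set.BijOn (fun x => (f (x + s) + f s) / x) {x : F | x ≠ 0} {x : F | x ≠ 0}


/-- Let `W` be an `n`-dimensional `GF(q)`-subspace (`q` even) of the space of functions
`GF(q^n) → GF(q^n)` vanishing at `0`, all of whose nonzero elements are o-permutations.
Then evaluation at `1` is a bijection from `W` onto `GF(q^n)`; in particular
`{f 1 : f ∈ W} = GF(q^n)`. -/
theorem wild_subspace_eval_one_bijective (K F : Type*) [Field K] [Field F] [Algebra K F]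
    [Fintype K] [Fintype F] (q n : ℕ)
    (hq : Fintype.card K = q) (hqn : Fintype.card F = q ^ n) (heven : Even q)
    (W : Submodule K (F → F)) (h0 : ∀ f ∈ W, f 0 = 0)
    (hdim : Module.finrank K W = n)
    (hop : ∀ f ∈ W, f ≠ 0 → IsOPerm F f) :
    Function.Bijective (fun f : W => (f : F → F) 1) ∧
      (fun f : F → F => f 1) '' (W : Set (F → F)) = Set.univ := by
  classical
  haveI : Fintype W := Fintype.ofFinite W
  have hinj : Function.Injective (fun f : W => (f : F → F) 1) := by
    intro f g hfg
    by_contra hne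
    have hsub : (f : F → F) - g ∈ W := sub_mem f.2 g.2
    have hne' : (f : F → F) - (g : F → F) ≠ 0 := fun h =>
      hne (Subtype.ext (sub_eq_zero.mp h))
    have := (hop _ hsub hne').2.1
    apply this
    show (f : F → F) 1 - (g : F → F) 1 = 0
    rw [show (f : F → F) 1 = (g : F → F) 1 from hfg, sub_self]
  have hcard : Fintype.card W = Fintype.card F := by
    rw [Module.card_eq_pow_finrank (K := K) (V := W), hdim, hq, hqn]
  have hbij : Function.Bijective (fun f : W => (f : F → F) 1) :=
    (Fintype.bijective_iff_injective_and_card _).mpr ⟨hinj, hcard⟩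
  refine ⟨hbij, Set.eq_univ_of_forall fun y => ?_⟩
  obtain ⟨f, hf⟩ := hbij.2 y
  exact ⟨f, f.2, hf⟩
end

section
/- Let q be even and f an o-permutation over GF(q). Then the set D(f) = {(1, t, f(t)) : t ∈ GF(q)} ∪ {(0,1,0)} of points of PG(2,q) is an oval (a set of q+1 points no three of which are collinear), and the point (0,0,1) is its nucleus, i.e., every line through (0,0,1) meets D(f) in exactly one point. -/
open Projectivization
open scoped LinearAlgebra.Projectivization

variable (F : Type*) [Field F]

lemma vec_ne_zero₀ (t u : F) : (![1, t, u] : Fin 3 → F) ≠ 0 := by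
  intro h; simpa using congrFun h 0

lemma vec_ne_zero₁ : (![0, 1, 0] : Fin 3 → F) ≠ 0 := by
  intro h; simpa using congrFun h 1

lemma vec_ne_zero₂ : (![0, 0, 1] : Fin 3 → F) ≠ 0 := by
  intro h; simpa using congrFun h 2

/-- The line of `PG(2, q)` with equation `a₀ x₀ + a₁ x₁ + a₂ x₂ = 0` (for `a ≠ 0`),
as a set of projective points. -/
def projLine (a : Fin 3 → F) : Set (ℙ F (Fin 3 → F)) :=
  {p | ∑ i, a i * p.rep i = 0}

/-- An oval in `PG(2, q)`: a set of `q + 1` points, no three of which are collinear. -/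
def IsOval (q : ℕ) (S : Set (ℙ F (Fin 3 → F))) : Prop :=
  Nat.card S = q + 1 ∧
  ∀ p₁ ∈ S, ∀ p₂ ∈ S, ∀ p₃ ∈ S, p₁ ≠ p₂ → p₁ ≠ p₃ → p₂ ≠ p₃ →
    Independent ![p₁, p₂, p₃]

/-- A nucleus of a set `S` of points of `PG(2, q)`: a point not in `S` such that every
line through it meets `S` in exactly one point. -/
def IsNucleus (N : ℙ F (Fin 3 → F)) (S : Set (ℙ F (Fin 3 → F))) : Prop :=
  N ∉ S ∧ ∀ a : Fin 3 → F, a ≠ 0 → N ∈ projLine F a → ∃! p, p ∈ S ∧ p ∈ projLine F a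

/-- The point set `D(f) = {(1, t, f t) : t ∈ GF(q)} ∪ {(0, 1, 0)}` of `PG(2, q)`. -/
def ovalD (f : F → F) : Set (ℙ F (Fin 3 → F)) :=
  {p | ∃ t : F, p = Projectivization.mk F ![1, t, f t] (vec_ne_zero₀ F t (f t))} ∪
    {Projectivization.mk F ![0, 1, 0] (vec_ne_zero₁ F)}

/- ============ auxiliary lemmas ============ -/

lemma two_eq_zero_of_even_card [Fintype F] (hq : Even (Fintype.card F)) : (2 : F) = 0 := by
  haveI : CharP F (ringChar F) := ringChar.charP F
  obtain ⟨n, hp, hcard⟩ := FiniteField.card F (ringChar F)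
  have hdvd : 2 ∣ ringChar F ^ (n : ℕ) := hcard ▸ hq.two_dvd
  have hd : 2 ∣ ringChar F := Nat.Prime.dvd_of_dvd_pow Nat.prime_two hdvd
  have hc2 : ringChar F = 2 := ((Nat.prime_dvd_prime_iff_eq Nat.prime_two hp).mp hd).symm
  have := CharP.cast_eq_zero F (ringChar F)
  rw [hc2] at this
  exact_mod_cast this

variable {F}

lemma mem_projLine_mk (a v : Fin 3 → F) (hv : v ≠ 0) :
    Projectivization.mk F v hv ∈ projLine F a ↔ ∑ i, a i * v i = 0 := by
  obtain ⟨u, hu⟩ := Projectivization.exists_smul_eq_mk_rep F v hv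
  have hrep : ∀ i, (Projectivization.mk F v hv).rep i = (u : F) * v i := by
    intro i; rw [← hu]; rfl
  simp only [projLine, Set.mem_setOf_eq, hrep]
  rw [show (∑ i, a i * ((u : F) * v i)) = (u : F) * ∑ i, a i * v i by
    rw [Finset.mul_sum]; congr 1; funext i; ring]
  rw [mul_eq_zero]
  simp [u.ne_zero]

lemma mkP_inj {t u x y : F} (hx : (![1, t, x] : Fin 3 → F) ≠ 0)
    (hy : (![1, u, y] : Fin 3 → F) ≠ 0)
    (h : Projectivization.mk F ![1, t, x] hx = Projectivization.mk F ![1, u, y] hy) :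
    t = u ∧ x = y := by
  rw [Projectivization.mk_eq_mk_iff'] at h
  obtain ⟨α, hα⟩ := h
  have h0 := congrFun hα 0
  have h1 := congrFun hα 1
  have h2 := congrFun hα 2
  simp only [Pi.smul_apply, smul_eq_mul, Matrix.cons_val_zero, Matrix.cons_val_one,
    Matrix.head_cons, Matrix.cons_val_two, Matrix.tail_cons, mul_one] at h0 h1 h2
  subst h0
  simp_all

lemma mkP_ne_inf {t x : F} (hx : (![1, t, x] : Fin 3 → F) ≠ 0) :
    Projectivization.mk F ![1, t, x] hx ≠ Projectivization.mk F ![0, 1, 0] (vec_ne_zero₁ F) := by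
  intro h
  rw [Projectivization.mk_eq_mk_iff'] at h
  obtain ⟨α, hα⟩ := h
  have h0 := congrFun hα 0
  simp at h0

lemma indep_of_det (v₁ v₂ v₃ : Fin 3 → F) (h₁ : v₁ ≠ 0) (h₂ : v₂ ≠ 0) (h₃ : v₃ ≠ 0)
    (hdet : Matrix.det (Matrix.of ![v₁, v₂, v₃]) ≠ 0) :
    Independent ![Projectivization.mk F v₁ h₁, Projectivization.mk F v₂ h₂,
      Projectivization.mk F v₃ h₃] := by
  have hv : ∀ i, (![v₁, v₂, v₃] : Fin 3 → Fin 3 → F) i ≠ 0 := by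
    intro i; fin_cases i <;> assumption
  have hli : LinearIndependent F ![v₁, v₂, v₃] := by
    have := Matrix.linearIndependent_rows_iff_isUnit.mpr
      ((Matrix.isUnit_iff_isUnit_det (Matrix.of ![v₁, v₂, v₃])).mpr
        (isUnit_iff_ne_zero.mpr hdet))
    exact this
  have key := Independent.mk (K := F) ![v₁, v₂, v₃] hv hli
  have : (![Projectivization.mk F v₁ h₁, Projectivization.mk F v₂ h₂,
      Projectivization.mk F v₃ h₃] : Fin 3 → ℙ F (Fin 3 → F)) =
      fun i => Projectivization.mk F ((![v₁, v₂, v₃]) i) (hv i) := by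
    funext i; fin_cases i <;> rfl
  rw [this]
  exact key

lemma f_injective {f : F → F} (h2 : (2 : F) = 0) (hf : IsOPerm F f) :
    Function.Injective f := by
  intro a b hab
  by_contra hne
  have hx : a - b ≠ 0 := sub_ne_zero.2 hne
  have hmt := (hf.2.2 b).mapsTo (show a - b ∈ {x : F | x ≠ 0} from hx)
  apply hmt
  show (f (a - b + b) + f b) / (a - b) = 0
  rw [show a - b + b = a by ring, hab]
  rw [show f b + f b = 0 by linear_combination (f b) * h2, zero_div]

lemma slope_inj {f : F → F} (hf : IsOPerm F f) {a b c : F} (hb : b - a ≠ 0) (hc : c - a ≠ 0)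
    (h : (f b + f a) * (c - a) = (f c + f a) * (b - a)) : b = c := by
  have key := (hf.2.2 a).injOn (show b - a ∈ {x : F | x ≠ 0} from hb)
    (show c - a ∈ {x : F | x ≠ 0} from hc) ?_
  · exact sub_left_inj.mp key
  · show (f (b - a + a) + f a) / (b - a) = (f (c - a + a) + f a) / (c - a)
    rw [show b - a + a = b by ring, show c - a + a = c by ring, div_eq_div_iff hb hc, h]

/-- The affine points of `D(f)`. -/
def gD (f : F → F) (t : F) : ℙ F (Fin 3 → F) :=
  Projectivization.mk F ![1, t, f t] (vec_ne_zero₀ F t (f t))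

lemma ovalD_eq (f : F → F) :
    ovalD F f = insert (Projectivization.mk F ![0, 1, 0] (vec_ne_zero₁ F)) (Set.range (gD f)) := by
  ext p
  simp only [ovalD, Set.mem_union, Set.mem_setOf_eq, Set.mem_singleton_iff, Set.mem_insert_iff,
    Set.mem_range, gD]
  constructor
  · rintro (⟨t, rfl⟩ | h)
    · exact Or.inr ⟨t, rfl⟩
    · exact Or.inl h
  · rintro (h | ⟨t, rfl⟩)
    · exact Or.inr h
    · exact Or.inl ⟨t, rfl⟩

lemma mem_ovalD {f : F → F} {p : ℙ F (Fin 3 → F)} (h : p ∈ ovalD F f) :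
    (∃ t, p = gD f t) ∨ p = Projectivization.mk F ![0, 1, 0] (vec_ne_zero₁ F) := by
  rw [ovalD_eq] at h
  rcases h with h | ⟨t, rfl⟩
  · exact Or.inr h
  · exact Or.inl ⟨t, rfl⟩

variable (F)

/-- If `q` is even and `f` is an o-permutation over `GF(q)`, then
`D(f) = {(1, t, f t)} ∪ {(0,1,0)}` is an oval of `PG(2, q)` with nucleus `(0, 0, 1)`. -/
theorem oPerm_gives_oval_with_nucleus [Fintype F] (hq : Even (Fintype.card F))
    (f : F → F) (hf : IsOPerm F f) :
    IsOval F (Fintype.card F) (ovalD F f) ∧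
      IsNucleus F (Projectivization.mk F ![0, 0, 1] (vec_ne_zero₂ F)) (ovalD F f) := by
  have h2 : (2 : F) = 0 := two_eq_zero_of_even_card F hq
  have hfinj := f_injective h2 hf
  have hginj : Function.Injective (gD f) := by
    intro t u h
    exact (mkP_inj _ _ h).1
  have hinf_notin : Projectivization.mk F ![0, 1, 0] (vec_ne_zero₁ F) ∉ Set.range (gD f) := by
    rintro ⟨t, ht⟩
    exact mkP_ne_inf _ ht
  constructor
  · constructor
    · -- cardinality
      rw [Nat.card_coe_set_eq, ovalD_eq, Set.ncard_insert_of_notMem hinf_notin,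
        ← Nat.card_coe_set_eq, Nat.card_range_of_injective hginj, Nat.card_eq_fintype_card]
    · rintro p₁ hp₁ p₂ hp₂ p₃ hp₃ h12 h13 h23
      rcases mem_ovalD hp₁ with ⟨t₁, rfl⟩ | rfl <;>
        rcases mem_ovalD hp₂ with ⟨t₂, rfl⟩ | rfl <;>
        rcases mem_ovalD hp₃ with ⟨t₃, rfl⟩ | rfl
      · -- all affine
        have ht12 : t₁ ≠ t₂ := fun h => h12 (by rw [h])
        have ht13 : t₁ ≠ t₃ := fun h => h13 (by rw [h])
        have ht23 : t₂ ≠ t₃ := fun h => h23 (by rw [h])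
        apply indep_of_det
        intro hdet
        rw [Matrix.det_fin_three] at hdet
        simp only [Matrix.of_apply, Matrix.cons_val', Matrix.cons_val_zero, Matrix.cons_val_one,
          Matrix.head_cons, Matrix.cons_val_two, Matrix.tail_cons, Matrix.empty_val',
          Matrix.cons_val_fin_one, Matrix.head_fin_const, one_mul, mul_one] at hdet
        have hcross : (f t₂ + f t₁) * (t₃ - t₁) = (f t₃ + f t₁) * (t₂ - t₁) := by
          linear_combination hdet + (t₃ * f t₂ - t₁ * f t₂ + t₁ * f t₃ - t₂ * f t₃) * h2
        exact ht23 (slope_inj hf (sub_ne_zero.2 ht12.symm) (sub_ne_zero.2 ht13.symm) hcross)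
      · -- p₃ infinite
        have ht12 : t₁ ≠ t₂ := fun h => h12 (by rw [h])
        apply indep_of_det
        intro hdet
        rw [Matrix.det_fin_three] at hdet
        simp only [Matrix.of_apply, Matrix.cons_val', Matrix.cons_val_zero, Matrix.cons_val_one,
          Matrix.head_cons, Matrix.cons_val_two, Matrix.tail_cons, Matrix.empty_val',
          Matrix.cons_val_fin_one, Matrix.head_fin_const, one_mul, mul_one, mul_zero,
          zero_mul, sub_zero, zero_sub] at hdet
        have : f t₁ = f t₂ := by linear_combination hdet
        exact ht12 (hfinj this)
      · -- p₂ infinite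
        have ht13 : t₁ ≠ t₃ := fun h => h13 (by rw [h])
        apply indep_of_det
        intro hdet
        rw [Matrix.det_fin_three] at hdet
        simp only [Matrix.of_apply, Matrix.cons_val', Matrix.cons_val_zero, Matrix.cons_val_one,
          Matrix.head_cons, Matrix.cons_val_two, Matrix.tail_cons, Matrix.empty_val',
          Matrix.cons_val_fin_one, Matrix.head_fin_const, one_mul, mul_one, mul_zero,
          zero_mul, sub_zero, zero_sub] at hdet
        have : f t₁ = f t₃ := by linear_combination -hdet
        exact ht13 (hfinj this)
      · exact absurd rfl h23
      · -- p₁ infinite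
        have ht23 : t₂ ≠ t₃ := fun h => h23 (by rw [h])
        apply indep_of_det
        intro hdet
        rw [Matrix.det_fin_three] at hdet
        simp only [Matrix.of_apply, Matrix.cons_val', Matrix.cons_val_zero, Matrix.cons_val_one,
          Matrix.head_cons, Matrix.cons_val_two, Matrix.tail_cons, Matrix.empty_val',
          Matrix.cons_val_fin_one, Matrix.head_fin_const, one_mul, mul_one, mul_zero,
          zero_mul, sub_zero, zero_sub] at hdet
        have : f t₂ = f t₃ := by linear_combination hdet
        exact ht23 (hfinj this)
      · exact absurd rfl h13
      · exact absurd rfl h12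
      · exact absurd rfl h12
  · constructor
    · intro hmem
      rcases mem_ovalD hmem with ⟨t, ht⟩ | ht
      · rw [gD, Projectivization.mk_eq_mk_iff'] at ht
        obtain ⟨α, hα⟩ := ht
        have h0 := congrFun hα 0
        have hlast := congrFun hα 2
        simp at h0 hlast
        rw [h0, zero_mul] at hlast
        exact zero_ne_one hlast
      · rw [Projectivization.mk_eq_mk_iff'] at ht
        obtain ⟨α, hα⟩ := ht
        have hlast := congrFun hα 2
        simp at hlast
    · intro a ha hN
      rw [mem_projLine_mk] at hN
      simp only [Fin.sum_univ_three, Matrix.cons_val_zero, Matrix.cons_val_one, Matrix.head_cons,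
        Matrix.cons_val_two, Matrix.tail_cons, mul_zero, mul_one, zero_add, add_zero] at hN
      -- hN : a 2 = 0
      by_cases ha1 : a 1 = 0
      · have ha0 : a 0 ≠ 0 := by
          intro ha0
          apply ha
          funext i
          fin_cases i <;> simp [ha0, ha1, hN]
        refine ⟨Projectivization.mk F ![0, 1, 0] (vec_ne_zero₁ F), ⟨?_, ?_⟩, ?_⟩
        · rw [ovalD_eq]; exact Set.mem_insert _ _
        · rw [mem_projLine_mk]
          simp [Fin.sum_univ_three, ha1]
        · rintro p ⟨hmem, hline⟩
          rcases mem_ovalD hmem with ⟨t, rfl⟩ | rfl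
          · rw [gD, mem_projLine_mk] at hline
            simp only [Fin.sum_univ_three, Matrix.cons_val_zero, Matrix.cons_val_one,
              Matrix.head_cons, Matrix.cons_val_two, Matrix.tail_cons, mul_one, ha1, hN,
              zero_mul, add_zero] at hline
            exact absurd hline ha0
          · rfl
      · refine ⟨gD f (-(a 0) / a 1), ⟨?_, ?_⟩, ?_⟩
        · rw [ovalD_eq]; exact Set.mem_insert_of_mem _ ⟨_, rfl⟩
        · rw [gD, mem_projLine_mk]
          simp only [Fin.sum_univ_three, Matrix.cons_val_zero, Matrix.cons_val_one,
            Matrix.head_cons, Matrix.cons_val_two, Matrix.tail_cons, mul_one, hN, zero_mul,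
            add_zero]
          field_simp
          ring
        · rintro p ⟨hmem, hline⟩
          rcases mem_ovalD hmem with ⟨t, rfl⟩ | rfl
          · rw [gD, mem_projLine_mk] at hline
            simp only [Fin.sum_univ_three, Matrix.cons_val_zero, Matrix.cons_val_one,
              Matrix.head_cons, Matrix.cons_val_two, Matrix.tail_cons, mul_one, hN, zero_mul,
              add_zero] at hline
            -- hline : a 0 + a 1 * t = 0
            have ht : t = -(a 0) / a 1 := by
              rw [eq_div_iff ha1]
              linear_combination hline
            rw [ht]
          · rw [mem_projLine_mk] at hline
            simp only [Fin.sum_univ_three, Matrix.cons_val_zero, Matrix.cons_val_one,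
              Matrix.head_cons, Matrix.cons_val_two, Matrix.tail_cons, mul_zero, mul_one,
              zero_add, add_zero] at hline
            exact absurd hline ha1
end

section
/- Let q be even and O an oval in PG(2,q). Then every tangent line of O passes through a common point N (the nucleus); equivalently, the q+1 tangent lines of O are concurrent. -/
open Projectivization
open scoped LinearAlgebra.Projectivization

variable (F : Type*) [Field F]

/-!
In a projective plane of order `n`, an arc `O` of `n + 1` points has exactly one tangent at each
of its points, since the other `n` points of `O` give `n` distinct secants through it. If `n` is
even, `|O|` is odd, and the lines through a point `x ∉ O` partition `O`, so some line through `x`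
is a tangent. On a secant `ℓ`, the `n - 1` points off `O` are therefore covered by the tangents at
the `n - 1` points of `O` off `ℓ`, each of which meets `ℓ` once: every point of a secant off `O`
lies on exactly one tangent. The intersection `N` of two tangents thus lies on no secant, so the
line joining `N` to any `Q ∈ O` is the tangent at `Q`. `PG(2, q)` is a projective plane of
order `q`.
-/

namespace Configuration

variable {P L : Type*} [Membership P L]

variable (L) in
def IsArc (O : Set P) : Prop :=
  ∀ l : L, ∀ p ∈ O, ∀ q ∈ O, ∀ r ∈ O, p ∈ l → q ∈ l → r ∈ l → p ≠ q → r = p ∨ r = q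

def IsTangent (O : Set P) (l : L) : Prop :=
  ∃! p, p ∈ O ∧ p ∈ l

variable {O : Set P}

lemma IsTangent.eq {l : L} (h : IsTangent O l) {p q : P} (hp : p ∈ O) (hpl : p ∈ l)
    (hq : q ∈ O) (hql : q ∈ l) : p = q :=
  h.unique ⟨hp, hpl⟩ ⟨hq, hql⟩

lemma exists_ne_of_not_isTangent {l : L} {p : P} (hp : p ∈ O) (hpl : p ∈ l)
    (h : ¬IsTangent O l) : ∃ q ∈ O, q ∈ l ∧ q ≠ p := by
  by_contra! hne
  exact h ⟨p, ⟨hp, hpl⟩, fun q hq => hne q hq.1 hq.2⟩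

lemma IsArc.sep_mem_eq_pair (hO : IsArc L O) {l : L} {p q : P} (hp : p ∈ O) (hq : q ∈ O)
    (hpl : p ∈ l) (hql : q ∈ l) (hpq : p ≠ q) : {r ∈ O | r ∈ l} = {p, q} := by
  ext r
  refine ⟨fun hr => hO l p hp q hq r hr.1 hpl hql hr.2 hpq, ?_⟩
  rintro (rfl | rfl)
  exacts [⟨hp, hpl⟩, ⟨hq, hql⟩]

section Nondegenerate

variable [Nondegenerate P L]

lemma line_eq_of_ne {p q : P} {l₁ l₂ : L} (hpq : p ≠ q) (hp₁ : p ∈ l₁) (hq₁ : q ∈ l₁)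
    (hp₂ : p ∈ l₂) (hq₂ : q ∈ l₂) : l₁ = l₂ :=
  (Nondegenerate.eq_or_eq hp₁ hq₁ hp₂ hq₂).resolve_left hpq

lemma point_eq_of_ne {p q : P} {l₁ l₂ : L} (hl : l₁ ≠ l₂) (hp₁ : p ∈ l₁) (hq₁ : q ∈ l₁)
    (hp₂ : p ∈ l₂) (hq₂ : q ∈ l₂) : p = q :=
  (Nondegenerate.eq_or_eq hp₁ hq₁ hp₂ hq₂).resolve_right hl

lemma IsTangent.exists_mem_notMem_of_secant {t ℓ : L} (ht : IsTangent O t) {p₁ p₂ y : P}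
    (hp₁ : p₁ ∈ O) (hp₂ : p₂ ∈ O) (h₁₂ : p₁ ≠ p₂) (hp₁ℓ : p₁ ∈ ℓ) (hp₂ℓ : p₂ ∈ ℓ)
    (hyt : y ∈ t) (hyℓ : y ∈ ℓ) (hyO : y ∉ O) : ∃ q ∈ O, q ∈ t ∧ q ∉ ℓ := by
  obtain ⟨q, hq, hqt⟩ := ht.exists
  refine ⟨q, hq, hqt, fun hqℓ => h₁₂ ?_⟩
  have hyq : y ≠ q := by rintro rfl; exact hyO hq
  have htℓ : t = ℓ := line_eq_of_ne hyq hyt hqt hyℓ hqℓ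
  exact ht.eq hp₁ (htℓ ▸ hp₁ℓ) hp₂ (htℓ ▸ hp₂ℓ)

end Nondegenerate

section HasLines

variable [HasLines P L]

lemma ncard_eq_finsum_ncard_sep_mem [Finite P] [Finite L] {x : P} (hx : x ∉ O) :
    O.ncard = ∑ᶠ l ∈ {l : L | x ∈ l}, {q ∈ O | q ∈ l}.ncard := by
  have hunion : O = ⋃ l ∈ {l : L | x ∈ l}, {q ∈ O | q ∈ l} := by
    ext q
    simp only [Set.mem_iUnion, Set.mem_ofPred_eq, exists_prop]
    refine ⟨fun hq => ?_, fun ⟨_, _, hq, _⟩ => hq⟩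
    have hxq : x ≠ q := by rintro rfl; exact hx hq
    exact ⟨_, (HasLines.mkLine_ax hxq).1, hq, (HasLines.mkLine_ax hxq).2⟩
  conv_lhs => rw [hunion]
  refine (Set.toFinite _).ncard_biUnion (fun _ _ => Set.toFinite _) ?_
  intro l₁ hl₁ l₂ hl₂ hne
  refine Set.disjoint_left.2 fun q hq₁ hq₂ => hne (line_eq_of_ne ?_ hl₁ hq₁.2 hl₂ hq₂.2)
  rintro rfl
  exact hx hq₁.1

lemma IsArc.even_ncard_of_forall_not_isTangent [Finite P] [Finite L] (hO : IsArc L O) {x : P}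
    (hx : x ∉ O) (h : ∀ l : L, x ∈ l → ¬IsTangent O l) : Even O.ncard := by
  rw [ncard_eq_finsum_ncard_sep_mem (L := L) hx]
  refine finsum_mem_induction Even .zero (fun _ _ => Even.add) fun l hl => ?_
  obtain hempty | ⟨p, hp, hpl⟩ := Set.eq_empty_or_nonempty {q ∈ O | q ∈ l}
  · simp [hempty]
  obtain ⟨q, hq, hql, hqp⟩ := exists_ne_of_not_isTangent hp hpl (h l hl)
  rw [hO.sep_mem_eq_pair hp hq hpl hql hqp.symm, Set.ncard_pair hqp.symm]
  exact even_two

lemma IsArc.ncard_setOf_not_isTangent (hO : IsArc L O) {p : P} (hp : p ∈ O) :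
    {l : L | p ∈ l ∧ ¬IsTangent O l}.ncard = O.ncard - 1 := by
  rw [← Set.ncard_sdiff_singleton_of_mem hp]
  symm
  refine Set.ncard_congr (fun q hq => HasLines.mkLine (Ne.symm hq.2 : p ≠ q)) ?_ ?_ ?_
  · intro q hq
    have hpq : p ≠ q := Ne.symm hq.2
    refine ⟨(HasLines.mkLine_ax hpq).1, fun ht => hpq ?_⟩
    exact ht.eq hp (HasLines.mkLine_ax hpq).1 hq.1 (HasLines.mkLine_ax hpq).2
  · intro q r hq hr hqr
    have hpq : p ≠ q := Ne.symm hq.2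
    have hpr : p ≠ r := Ne.symm hr.2
    have hrl : r ∈ HasLines.mkLine hpq := hqr ▸ (HasLines.mkLine_ax hpr).2
    exact ((hO _ p hp q hq.1 r hr.1 (HasLines.mkLine_ax hpq).1 (HasLines.mkLine_ax hpq).2 hrl
      hpq).resolve_left hpr.symm).symm
  · rintro l ⟨hpl, hl⟩
    obtain ⟨q, hq, hql, hqp⟩ := exists_ne_of_not_isTangent hp hpl hl
    exact ⟨q, ⟨hq, hqp⟩, line_eq_of_ne hqp.symm (HasLines.mkLine_ax _).1 (HasLines.mkLine_ax _).2
      hpl hql⟩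

end HasLines

section ProjectivePlane

open ProjectivePlane

variable [ProjectivePlane P L] [Finite P] [Finite L]

lemma ncard_setOf_lines_mem (p : P) : {l : L | p ∈ l}.ncard = order P L + 1 :=
  (Nat.card_coe_set_eq _).symm.trans (lineCount_eq L p)

lemma ncard_setOf_points_mem (l : L) : {p : P | p ∈ l}.ncard = order P L + 1 :=
  (Nat.card_coe_set_eq _).symm.trans (pointCount_eq P l)

lemma ncard_sdiff_setOf_mem_eq (hcard : O.ncard = order P L + 1) (ℓ : L) :
    (O \ {q | q ∈ ℓ}).ncard = ({q | q ∈ ℓ} \ O).ncard := by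
  have hO := Set.ncard_inter_add_ncard_sdiff_eq_ncard O {q | q ∈ ℓ}
  have hℓ := Set.ncard_inter_add_ncard_sdiff_eq_ncard {q | q ∈ ℓ} O
  rw [Set.inter_comm, ncard_setOf_points_mem] at hℓ
  omega

lemma IsArc.existsUnique_isTangent (hO : IsArc L O) (hcard : O.ncard = order P L + 1) {p : P}
    (hp : p ∈ O) : ∃! l : L, p ∈ l ∧ IsTangent O l := by
  have hsplit : {l : L | p ∈ l ∧ IsTangent O l} =
      {l : L | p ∈ l} \ {l : L | p ∈ l ∧ ¬IsTangent O l} := by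
    ext l
    simp only [Set.mem_ofPred_eq, Set.mem_sdiff]
    tauto
  have hone : {l : L | p ∈ l ∧ IsTangent O l}.ncard = 1 := by
    rw [hsplit, Set.ncard_sdiff (fun l hl => hl.1), ncard_setOf_lines_mem,
      hO.ncard_setOf_not_isTangent hp, hcard]
    omega
  obtain ⟨t, ht⟩ := Set.ncard_eq_one.1 hone
  exact ⟨t, (ht ▸ rfl : t ∈ {l : L | p ∈ l ∧ IsTangent O l}),
    fun l hl => (ht ▸ hl : l ∈ ({t} : Set L))⟩

lemma IsArc.exists_isTangent_of_notMem (hn : Even (order P L)) (hO : IsArc L O)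
    (hcard : O.ncard = order P L + 1) {x : P} (hx : x ∉ O) : ∃ l : L, x ∈ l ∧ IsTangent O l := by
  by_contra! h
  have := hO.even_ncard_of_forall_not_isTangent hx h
  rw [hcard, Nat.even_add_one] at this
  exact this hn

lemma IsArc.exists_tangent_inter (hO : IsArc L O) (hcard : O.ncard = order P L + 1) (ℓ : L) :
    ∃ f : P → P, ∀ q ∈ O, q ∉ ℓ → f q ∈ ℓ ∧ f q ∉ O ∧
      ∀ t : L, q ∈ t → IsTangent O t → ∀ y ∈ ℓ, y ∈ t ↔ y = f q := by
  have hinter : ∀ q ∈ O, q ∉ ℓ → ∃ y, y ∈ ℓ ∧ y ∉ O ∧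
      ∀ t : L, q ∈ t → IsTangent O t → ∀ z ∈ ℓ, z ∈ t ↔ z = y := by
    intro q hq hqℓ
    obtain ⟨t, ⟨hqt, ht⟩, htu⟩ := hO.existsUnique_isTangent hcard hq
    have htℓ : t ≠ ℓ := by rintro rfl; exact hqℓ hqt
    obtain ⟨hyt, hyℓ⟩ := HasPoints.mkPoint_ax (P := P) htℓ
    refine ⟨_, hyℓ, fun hyO => hqℓ (ht.eq hyO hyt hq hqt ▸ hyℓ), fun t' hqt' ht' z hzℓ => ?_⟩
    obtain rfl := htu t' ⟨hqt', ht'⟩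
    exact ⟨fun hzt => point_eq_of_ne htℓ hzt hyt hzℓ hyℓ, fun h => h ▸ hyt⟩
  choose! f hf using hinter
  exact ⟨f, hf⟩

lemma IsArc.existsUnique_isTangent_of_mem_secant (hn : Even (order P L)) (hO : IsArc L O)
    (hcard : O.ncard = order P L + 1) {p₁ p₂ x : P} {ℓ : L} (hp₁ : p₁ ∈ O) (hp₂ : p₂ ∈ O)
    (h₁₂ : p₁ ≠ p₂) (hp₁ℓ : p₁ ∈ ℓ) (hp₂ℓ : p₂ ∈ ℓ) (hxℓ : x ∈ ℓ) (hx : x ∉ O) :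
    ∃! t : L, x ∈ t ∧ IsTangent O t := by
  obtain ⟨f, hf⟩ := hO.exists_tangent_inter hcard ℓ
  have himage : f '' (O \ {q | q ∈ ℓ}) = {q | q ∈ ℓ} \ O := by
    refine Set.Subset.antisymm ?_ fun y hy => ?_
    · rintro _ ⟨q, ⟨hq, hqℓ⟩, rfl⟩
      exact ⟨(hf q hq hqℓ).1, (hf q hq hqℓ).2.1⟩
    · obtain ⟨t, hyt, ht⟩ := hO.exists_isTangent_of_notMem hn hcard hy.2
      obtain ⟨q, hq, hqt, hqℓ⟩ := ht.exists_mem_notMem_of_secant hp₁ hp₂ h₁₂ hp₁ℓ hp₂ℓ hyt hy.1 hy.2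
      exact ⟨q, ⟨hq, hqℓ⟩, (((hf q hq hqℓ).2.2 t hqt ht y hy.1).1 hyt).symm⟩
  have hinj : Set.InjOn f (O \ {q | q ∈ ℓ}) :=
    Set.injOn_of_ncard_image_eq (by rw [himage, ncard_sdiff_setOf_mem_eq hcard])
  obtain ⟨t, hxt, ht⟩ := hO.exists_isTangent_of_notMem hn hcard hx
  refine ⟨t, ⟨hxt, ht⟩, fun t' ⟨hxt', ht'⟩ => ?_⟩
  obtain ⟨q, hq, hqt, hqℓ⟩ := ht.exists_mem_notMem_of_secant hp₁ hp₂ h₁₂ hp₁ℓ hp₂ℓ hxt hxℓ hx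
  obtain ⟨q', hq', hqt', hq'ℓ⟩ :=
    ht'.exists_mem_notMem_of_secant hp₁ hp₂ h₁₂ hp₁ℓ hp₂ℓ hxt' hxℓ hx
  have hqq' : q' = q := hinj ⟨hq', hq'ℓ⟩ ⟨hq, hqℓ⟩ <|
    (((hf q' hq' hq'ℓ).2.2 t' hqt' ht' x hxℓ).1 hxt').symm.trans
      (((hf q hq hqℓ).2.2 t hqt ht x hxℓ).1 hxt)
  subst hqq'
  exact (hO.existsUnique_isTangent hcard hq).unique ⟨hqt', ht'⟩ ⟨hqt, ht⟩

theorem IsArc.exists_forall_isTangent_mem (hn : Even (order P L)) (hO : IsArc L O)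
    (hcard : O.ncard = order P L + 1) : ∃ N : P, ∀ l : L, IsTangent O l → N ∈ l := by
  obtain ⟨A, hA, B, hB, hAB⟩ : ∃ A ∈ O, ∃ B ∈ O, A ≠ B :=
    Set.one_lt_ncard_iff_nontrivial.1 (by have := one_lt_order P L; omega)
  obtain ⟨tA, ⟨hAtA, htA⟩, -⟩ := hO.existsUnique_isTangent hcard hA
  obtain ⟨tB, ⟨hBtB, htB⟩, -⟩ := hO.existsUnique_isTangent hcard hB
  have htAB : tA ≠ tB := by
    rintro rfl
    exact hAB (htA.eq hA hAtA hB hBtB)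
  set N : P := HasPoints.mkPoint htAB
  obtain ⟨hNA, hNB⟩ : N ∈ tA ∧ N ∈ tB := HasPoints.mkPoint_ax htAB
  have hNO : N ∉ O := fun hN => hAB ((htA.eq hN hNA hA hAtA).symm.trans (htB.eq hN hNB hB hBtB))
  refine ⟨N, fun l hl => ?_⟩
  obtain ⟨Q, hQ, hQl⟩ := hl.exists
  by_contra hNl
  have hNQ : N ≠ Q := by rintro rfl; exact hNO hQ
  set m : L := HasLines.mkLine hNQ
  obtain ⟨hNm, hQm⟩ : N ∈ m ∧ Q ∈ m := HasLines.mkLine_ax hNQ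
  have hm : ¬IsTangent O m := fun hm =>
    hNl ((hO.existsUnique_isTangent hcard hQ).unique ⟨hQm, hm⟩ ⟨hQl, hl⟩ ▸ hNm)
  obtain ⟨Q', hQ', hQ'm, hQ'Q⟩ := exists_ne_of_not_isTangent hQ hQm hm
  exact htAB <| (hO.existsUnique_isTangent_of_mem_secant hn hcard hQ hQ' hQ'Q.symm hQm hQ'm
    hNm hNO).unique ⟨hNA, htA⟩ ⟨hNB, htB⟩

end ProjectivePlane

end Configuration

namespace Projectivization

variable {F}

lemma orthogonal_iff_dotProduct_rep {m : Type*} [Fintype m] (v w : ℙ F (m → F)) :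
    v.orthogonal w ↔ v.rep ⬝ᵥ w.rep = 0 := by
  rw [← orthogonal_mk v.rep_nonzero w.rep_nonzero, mk_rep, mk_rep]

lemma not_independent_of_forall_orthogonal {m : Type*} [Fintype m] [DecidableEq m]
    (f : m → ℙ F (m → F)) (w : ℙ F (m → F)) (h : ∀ i, (f i).orthogonal w) :
    ¬Independent f := by
  intro hf
  rw [independent_iff] at hf
  let M : Matrix m m F := Matrix.of fun i => (f i).rep
  have hM : Function.Injective M.mulVec :=
    Matrix.mulVec_injective_iff_isUnit.2 (Matrix.linearIndependent_rows_iff_isUnit.1 hf)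
  have hMw : M.mulVec w.rep = M.mulVec 0 := by
    ext i
    simp [M, Matrix.mulVec, ← orthogonal_iff_dotProduct_rep, h i]
  exact w.rep_nonzero (hM hMw)

end Projectivization

section PG2

open Configuration ProjectivePlane

variable {F}

lemma mem_projLine_iff {a : Fin 3 → F} (ha : a ≠ 0) (p : ℙ F (Fin 3 → F)) :
    p ∈ projLine F a ↔ p ∈ mk F a ha := by
  rw [ofField.mem_iff, ← p.mk_rep, orthogonal_mk, mk_rep, projLine, Set.mem_ofPred_eq,
    dotProduct_comm]
  rfl

lemma IsOval.isArc {q : ℕ} {O : Set (ℙ F (Fin 3 → F))} (hO : IsOval F q O) :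
    IsArc (ℙ F (Fin 3 → F)) O := by
  intro l p hp q hq r hr hpl hql hrl hpq
  by_contra! hr'
  refine not_independent_of_forall_orthogonal ![p, q, r] l (fun i => ?_)
    (hO.2 p hp q hq r hr hpq hr'.1.symm hr'.2.symm)
  fin_cases i <;> assumption

lemma order_eq_card [Fintype F] [DecidableEq F] :
    order (ℙ F (Fin 3 → F)) (ℙ F (Fin 3 → F)) = Fintype.card F := by
  have : Fintype (ℙ F (Fin 3 → F)) := Fintype.ofFinite _
  have hpoints := card_points (ℙ F (Fin 3 → F)) (ℙ F (Fin 3 → F))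
  rw [Fintype.card_eq_nat_card, card_of_finrank F (Fin 3 → F) (Module.finrank_fin_fun F),
    Nat.card_eq_fintype_card] at hpoints
  simp only [Finset.sum_range_succ, Finset.sum_range_zero] at hpoints
  by_contra hne
  rcases lt_or_gt_of_ne hne with h | h <;> nlinarith

end PG2

/-- For `q` even, all tangent lines of an oval `O` of `PG(2, q)` (the lines meeting `O`
in exactly one point) pass through a common point `N`, the nucleus: the `q + 1` tangent
lines of `O` are concurrent. -/
theorem tangents_concurrent [Fintype F] (hq : Even (Fintype.card F))
    (O : Set (ℙ F (Fin 3 → F))) (hO : IsOval F (Fintype.card F) O) :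
    ∃ N : ℙ F (Fin 3 → F), ∀ a : Fin 3 → F, a ≠ 0 →
      (∃! p, p ∈ O ∧ p ∈ projLine F a) → N ∈ projLine F a := by
  classical
  have hcard :
      O.ncard = Configuration.ProjectivePlane.order (ℙ F (Fin 3 → F)) (ℙ F (Fin 3 → F)) + 1 := by
    rw [order_eq_card, ← hO.1, Nat.card_coe_set_eq]
  obtain ⟨N, hN⟩ := hO.isArc.exists_forall_isTangent_mem (order_eq_card (F := F) ▸ hq) hcard
  refine ⟨N, fun a ha htan => ?_⟩
  simp only [mem_projLine_iff ha] at htan ⊢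
  exact hN _ htan
end

section
/- Let O be an n-dimensional pseudo-oval in PG(3n-1,q) with q even. Then the q^n + 1 tangent spaces of O all contain a common (n-1)-dimensional subspace N (the nucleus of O). -/
open Module Submodule Finset

open Module Submodule Finset

noncomputable def fsOf {α : Type*} [Finite α] (s : Set α) : Finset α := s.toFinite.toFinset

@[simp] lemma mem_fsOf {α : Type*} [Finite α] {s : Set α} {x : α} :
    x ∈ fsOf s ↔ x ∈ s := Set.Finite.mem_toFinset _

lemma fsOf_card {α : Type*} [Finite α] (s : Set α) : (fsOf s).card = Nat.card s := by
  rw [Nat.card_coe_set_eq, Set.ncard_eq_toFinset_card s s.toFinite]; rfl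

lemma fsOf_subset {α : Type*} [Finite α] {s t : Set α} (h : s ⊆ t) : fsOf s ⊆ fsOf t := by
  intro x hx; rw [mem_fsOf] at *; exact h hx

section VS

variable {F : Type*} [Field F] [Fintype F] {n : ℕ}

local notation "V" => (Fin (3 * n) → F)
local notation "q" => Fintype.card F

lemma card_submodule (P : Submodule F V) :
    (fsOf (P : Set V)).card = q ^ finrank F P := by
  classical
  rw [fsOf_card, SetLike.coe_sort_coe]
  letI : Fintype ↥P := Fintype.ofFinite _
  rw [Nat.card_eq_fintype_card]
  exact card_eq_pow_finrank

lemma finrank_V : finrank F V = 3 * n := by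
  simp [Module.finrank_pi]

end VS

lemma even_card_of_involution {α : Type*} [DecidableEq α] (σ : α → α) :
    ∀ (s : Finset α), (∀ a ∈ s, σ a ∈ s) → (∀ a ∈ s, σ (σ a) = a) →
      (∀ a ∈ s, σ a ≠ a) → Even s.card := by
  intro s
  induction s using Finset.strongInduction with
  | _ s ih =>
    intro hmem hinv hne
    rcases s.eq_empty_or_nonempty with rfl | ⟨a, ha⟩
    · simp
    · have hsa : σ a ∈ s := hmem a ha
      have hne_a : σ a ≠ a := hne a ha
      set t := (s.erase a).erase (σ a) with ht
      have htsub : t ⊆ s := (Finset.erase_subset _ _).trans (Finset.erase_subset _ _)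
      have hmt : ∀ b, b ∈ t ↔ b ∈ s ∧ b ≠ a ∧ b ≠ σ a := by
        intro b
        simp only [ht, Finset.mem_erase]
        tauto
      have hts : t ⊂ s := Finset.ssubset_of_ssubset_of_subset
        (Finset.erase_ssubset (Finset.mem_erase.2 ⟨hne_a, hsa⟩)) (Finset.erase_subset _ _)
      have hcard : t.card + 2 = s.card := by
        rw [ht, Finset.card_erase_of_mem (Finset.mem_erase.2 ⟨hne_a, hsa⟩),
          Finset.card_erase_of_mem ha]
        have : 1 ≤ s.card := Finset.card_pos.2 ⟨a, ha⟩
        have : 2 ≤ s.card := by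
          have : ({σ a, a} : Finset α) ⊆ s := by
            intro x hx; simp at hx; rcases hx with rfl | rfl <;> assumption
          calc 2 = ({σ a, a} : Finset α).card := by rw [Finset.card_insert_of_notMem (by simpa), Finset.card_singleton]
          _ ≤ s.card := Finset.card_le_card this
        omega
      have hσinj : ∀ b ∈ s, ∀ c ∈ s, σ b = σ c → b = c := by
        intro b hb c hc h
        have := hinv b hb; have := hinv c hc
        rw [← hinv b hb, h, hinv c hc]
      have ht1 : ∀ b ∈ t, σ b ∈ t := by
        intro b hb
        have hbs := htsub hb
        rw [hmt] at hb ⊢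
        refine ⟨hmem b hbs, ?_, ?_⟩
        · intro h
          have hba : σ a = b := by rw [← h, hinv b hbs]
          exact hb.2.2 hba.symm
        · intro h; exact hb.2.1 (hσinj b hbs a ha h)
      have ht2 : ∀ b ∈ t, σ (σ b) = b := fun b hb => hinv b (htsub hb)
      have ht3 : ∀ b ∈ t, σ b ≠ b := fun b hb => hne b (htsub hb)
      obtain ⟨m, hm⟩ := ih t hts ht1 ht2 ht3
      exact ⟨m + 1, by omega⟩



/-- An `n`-dimensional pseudo-oval in `PG(3n - 1, q)`: a set of `q^n + 1` subspaces of
projective dimension `n - 1` (i.e. vector-space dimension `n`) such that any three of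
them span the whole space. -/
def IsPseudoOval (F : Type*) [Field F] [Fintype F] (n : ℕ)
    (O : Set (Submodule F (Fin (3 * n) → F))) : Prop :=
  Nat.card O = Fintype.card F ^ n + 1 ∧
  (∀ X ∈ O, Module.finrank F X = n) ∧
  (∀ X ∈ O, ∀ Y ∈ O, ∀ Z ∈ O, X ≠ Y → X ≠ Z → Y ≠ Z → X ⊔ Y ⊔ Z = ⊤)

/-- A tangent space of a pseudo-oval `O` at `X ∈ O`: a subspace of projective dimension
`2n - 1` (vector-space dimension `2n`) containing `X` and meeting no other element
of `O`. -/
def IsTangent (F : Type*) [Field F] [Fintype F] (n : ℕ)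
    (O : Set (Submodule F (Fin (3 * n) → F))) (X T : Submodule F (Fin (3 * n) → F)) :
    Prop :=
  Module.finrank F T = 2 * n ∧ X ≤ T ∧ ∀ Y ∈ O, Y ≠ X → T ⊓ Y = ⊥

section PO

set_option linter.unusedSectionVars false

variable {F : Type*} [Field F] [Fintype F] {n : ℕ}

local instance finite_subm : Finite (Submodule F (Fin (3 * n) → F)) :=
  Finite.of_injective (fun P => (P : Set (Fin (3 * n) → F))) SetLike.coe_injective

/-- Cardinality of a union of subspaces pairwise intersecting inside `K`. -/
lemma card_biUnion_core [DecidableEq (Fin (3 * n) → F)]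
    (s : Finset (Submodule F (Fin (3 * n) → F))) (hs : s.Nonempty)
    (K : Submodule F (Fin (3 * n) → F))
    (f : Submodule F (Fin (3 * n) → F) → Submodule F (Fin (3 * n) → F)) (m k : ℕ)
    (hle : ∀ P ∈ s, K ≤ f P)
    (hdisj : ∀ P ∈ s, ∀ Q ∈ s, P ≠ Q → f P ⊓ f Q ≤ K)
    (hm : ∀ P ∈ s, (fsOf ((f P : Set (Fin (3 * n) → F)))).card = m)
    (hk : (fsOf ((K : Set (Fin (3 * n) → F)))).card = k) (hkm : k ≤ m) :
    (s.biUnion fun P => fsOf ((f P : Set (Fin (3 * n) → F)))).card + s.card * k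
      = s.card * m + k := by
  classical
  set KF := fsOf (K : Set (Fin (3 * n) → F)) with hKF
  have hsubK : ∀ P ∈ s, KF ⊆ fsOf ((f P : Set (Fin (3 * n) → F))) := by
    intro P hP x hx
    rw [hKF, mem_fsOf] at hx
    rw [mem_fsOf]
    exact hle P hP hx
  have hsplit : (s.biUnion fun P => fsOf ((f P : Set (Fin (3 * n) → F))))
      = (s.biUnion fun P => fsOf ((f P : Set (Fin (3 * n) → F))) \ KF) ∪ KF := by
    ext x
    simp only [Finset.mem_biUnion, Finset.mem_union, Finset.mem_sdiff]
    constructor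
    · rintro ⟨P, hP, hx⟩
      by_cases hxK : x ∈ KF
      · exact Or.inr hxK
      · exact Or.inl ⟨P, hP, hx, hxK⟩
    · rintro (⟨P, hP, hx, _⟩ | hx)
      · exact ⟨P, hP, hx⟩
      · obtain ⟨P, hP⟩ := hs
        exact ⟨P, hP, hsubK P hP hx⟩
  have hdisjU : Disjoint (s.biUnion fun P => fsOf ((f P : Set (Fin (3 * n) → F))) \ KF) KF := by
    rw [Finset.disjoint_left]
    intro x hx
    rw [Finset.mem_biUnion] at hx
    obtain ⟨P, hP, hx⟩ := hx
    exact (Finset.mem_sdiff.1 hx).2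
  have hpair : ∀ P ∈ s, ∀ Q ∈ s, P ≠ Q →
      Disjoint (fsOf ((f P : Set (Fin (3 * n) → F))) \ KF)
        (fsOf ((f Q : Set (Fin (3 * n) → F))) \ KF) := by
    intro P hP Q hQ hne
    rw [Finset.disjoint_left]
    intro x hx hx'
    rw [Finset.mem_sdiff, mem_fsOf] at hx hx'
    have hxPQ : x ∈ f P ⊓ f Q := ⟨hx.1, hx'.1⟩
    have : x ∈ KF := by rw [hKF, mem_fsOf]; exact hdisj P hP Q hQ hne hxPQ
    exact hx.2 this
  have hcards : ∀ P ∈ s, (fsOf ((f P : Set (Fin (3 * n) → F))) \ KF).card = m - k := by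
    intro P hP
    rw [Finset.card_sdiff_of_subset (hsubK P hP), hm P hP, hk]
  rw [hsplit, Finset.card_union_of_disjoint hdisjU, Finset.card_biUnion hpair,
    Finset.sum_congr rfl hcards, Finset.sum_const, smul_eq_mul]
  have h1 : s.card * (m - k) + s.card * k = s.card * m := by
    rw [← Nat.mul_add, Nat.sub_add_cancel hkm]
  omega

variable {O : Set (Submodule F (Fin (3 * n) → F))}

lemma O_third (hO : IsPseudoOval F n O) (hn : 1 ≤ n) (X Y : Submodule F (Fin (3 * n) → F)) :
    ∃ Z ∈ O, Z ≠ X ∧ Z ≠ Y := by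
  by_contra h
  push_neg at h
  have hsub : O ⊆ {X, Y} := by
    intro Z hZ
    by_cases hZX : Z = X
    · exact Or.inl hZX
    · exact Or.inr (h Z hZ hZX)
  have h2 : Nat.card O ≤ 2 := by
    rw [Nat.card_coe_set_eq]
    calc O.ncard ≤ ({X, Y} : Set _).ncard := Set.ncard_le_ncard hsub (Set.toFinite _)
    _ ≤ 2 := (Set.ncard_insert_le _ _).trans (by simp)
  have hq2 : 2 ≤ Fintype.card F := Fintype.one_lt_card
  have h3 : 2 ≤ Fintype.card F ^ n := by
    calc 2 = 2 ^ 1 := rfl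
    _ ≤ Fintype.card F ^ n :=
      (Nat.pow_le_pow_left hq2 1).trans (Nat.pow_le_pow_right (by omega) hn)
  rw [hO.1] at h2
  omega

lemma rank_top_V : Module.finrank F (⊤ : Submodule F (Fin (3 * n) → F)) = 3 * n := by
  rw [finrank_top]; exact finrank_V

lemma rank_sup_two (hO : IsPseudoOval F n O) (hn : 1 ≤ n)
    {X Y : Submodule F (Fin (3 * n) → F)}
    (hX : X ∈ O) (hY : Y ∈ O) (hne : X ≠ Y) : Module.finrank F ↥(X ⊔ Y) = 2 * n := by
  obtain ⟨Z, hZ, hZX, hZY⟩ := O_third hO hn X Y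
  have htop : X ⊔ Y ⊔ Z = ⊤ := hO.2.2 X hX Y hY Z hZ hne (Ne.symm hZX) (Ne.symm hZY)
  have e1 := Submodule.finrank_sup_add_finrank_inf_eq X Y
  have e2 := Submodule.finrank_sup_add_finrank_inf_eq (X ⊔ Y) Z
  rw [htop, rank_top_V, hO.2.1 Z hZ] at e2
  rw [hO.2.1 X hX, hO.2.1 Y hY] at e1
  omega

lemma inf_two (hO : IsPseudoOval F n O) (hn : 1 ≤ n) {X Y : Submodule F (Fin (3 * n) → F)}
    (hX : X ∈ O) (hY : Y ∈ O) (hne : X ≠ Y) : X ⊓ Y = ⊥ := by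
  have e1 := Submodule.finrank_sup_add_finrank_inf_eq X Y
  rw [rank_sup_two hO hn hX hY hne, hO.2.1 X hX, hO.2.1 Y hY] at e1
  have h0 : Module.finrank F ↥(X ⊓ Y) = 0 := by omega
  exact Submodule.finrank_eq_zero.1 h0

lemma secant_inf (hO : IsPseudoOval F n O) (hn : 1 ≤ n) {X Y Z : Submodule F (Fin (3 * n) → F)}
    (hX : X ∈ O) (hY : Y ∈ O) (hZ : Z ∈ O) (hXY : X ≠ Y) (hXZ : X ≠ Z) (hYZ : Y ≠ Z) :
    (X ⊔ Y) ⊓ (X ⊔ Z) = X := by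
  have htop : (X ⊔ Y) ⊔ (X ⊔ Z) = ⊤ := by
    rw [sup_sup_sup_comm, sup_idem, ← sup_assoc]
    exact hO.2.2 X hX Y hY Z hZ hXY hXZ hYZ
  have e1 := Submodule.finrank_sup_add_finrank_inf_eq (X ⊔ Y) (X ⊔ Z)
  rw [htop, rank_top_V, rank_sup_two hO hn hX hY hXY, rank_sup_two hO hn hX hZ hXZ] at e1
  have hle : X ≤ (X ⊔ Y) ⊓ (X ⊔ Z) := le_inf le_sup_left le_sup_left
  have heq := Submodule.eq_of_le_of_finrank_le hle (by rw [hO.2.1 X hX]; omega)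
  exact heq.symm

lemma tangent_inf_secant {X Y T : Submodule F (Fin (3 * n) → F)}
    (hT : IsTangent F n O X T) (hY : Y ∈ O) (hne : Y ≠ X) : T ⊓ (X ⊔ Y) = X := by
  apply le_antisymm
  · intro v hv
    obtain ⟨hvT, hvXY⟩ := Submodule.mem_inf.mp hv
    obtain ⟨a, ha, b, hb, rfl⟩ := Submodule.mem_sup.1 hvXY
    have hbT : b ∈ T := by
      have h' : a + b - a ∈ T := Submodule.sub_mem _ hvT (hT.2.1 ha)
      simpa using h'
    have hb0 : b ∈ T ⊓ Y := Submodule.mem_inf.mpr ⟨hbT, hb⟩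
    rw [hT.2.2 Y hY hne] at hb0
    simp only [Submodule.mem_bot] at hb0
    simpa [hb0] using ha
  · exact le_inf hT.2.1 le_sup_left

end PO

section PO2

set_option linter.unusedSectionVars false
set_option maxHeartbeats 1000000

variable {F : Type*} [Field F] [Fintype F] {n : ℕ}
variable {O : Set (Submodule F (Fin (3 * n) → F))}

lemma OF_card (hO : IsPseudoOval F n O) :
    (fsOf O).card = Fintype.card F ^ n + 1 := by
  rw [fsOf_card, hO.1]

lemma pow1_le_pow2 : Fintype.card F ^ n ≤ Fintype.card F ^ (2 * n) :=
  Nat.pow_le_pow_right (Fintype.card_pos) (by omega)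

lemma pow_two_n : Fintype.card F ^ n * Fintype.card F ^ n = Fintype.card F ^ (2 * n) := by
  rw [← pow_add]; ring_nf

lemma pow_three_n :
    Fintype.card F ^ n * Fintype.card F ^ (2 * n) = Fintype.card F ^ (3 * n) := by
  rw [← pow_add]; ring_nf

lemma card_univ_V [DecidableEq F] :
    (Finset.univ : Finset (Fin (3 * n) → F)).card = Fintype.card F ^ (3 * n) := by
  rw [Finset.card_univ, Fintype.card_fun, Fintype.card_fin]

/-- Key characterization: any vector lying on no secant through `C` belongs to every
tangent space at `C`. -/
lemma tangent_mem_of (hO : IsPseudoOval F n O) (hn : 1 ≤ n)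
    {C T : Submodule F (Fin (3 * n) → F)} (hC : C ∈ O) (hT : IsTangent F n O C T)
    {v : Fin (3 * n) → F} (hv : ∀ Y ∈ O, Y ≠ C → v ∉ (C ⊔ Y : Submodule F (Fin (3 * n) → F))) :
    v ∈ T := by
  classical
  set Q := Fintype.card F ^ n with hQdef
  set A := Fintype.card F ^ (2 * n) with hAdef
  have hQ2 : 2 ≤ Q := by
    rw [hQdef]
    calc 2 = 2 ^ 1 := rfl
    _ ≤ Fintype.card F ^ n :=
      (Nat.pow_le_pow_left Fintype.one_lt_card 1).trans
        (Nat.pow_le_pow_right (by have := Fintype.one_lt_card (α := F); omega) hn)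
  set s := (fsOf O).erase C with hsdef
  have hscard : s.card = Q := by
    rw [hsdef, Finset.card_erase_of_mem (by rw [mem_fsOf]; exact hC), OF_card hO, hQdef]
    simp
  have hs : s.Nonempty := by
    rw [← Finset.card_pos, hscard]; omega
  have hmem_s : ∀ Y, Y ∈ s ↔ Y ∈ O ∧ Y ≠ C := by
    intro Y
    rw [hsdef, Finset.mem_erase, mem_fsOf]
    tauto
  -- the union of all secants through C
  set U := s.biUnion (fun Y => fsOf ((C ⊔ Y : Submodule F (Fin (3 * n) → F)) : Set (Fin (3 * n) → F))) with hUdef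
  have hU : U.card + Q * Q = Q * A + Q := by
    have h := card_biUnion_core s hs C (fun Y => C ⊔ Y) A Q
      (fun P _ => le_sup_left)
      (by
        intro P hP R hR hne
        rw [hmem_s] at hP hR
        exact le_of_eq (secant_inf hO hn hC hP.1 hR.1 (Ne.symm hP.2) (Ne.symm hR.2) hne))
      (by
        intro P hP
        rw [hmem_s] at hP
        rw [card_submodule, rank_sup_two hO hn hC hP.1 (Ne.symm hP.2), hAdef])
      (by rw [card_submodule, hO.2.1 C hC, hQdef])
      (by rw [hQdef, hAdef]; exact pow1_le_pow2)
    rw [hscard] at h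
    exact h
  -- the candidate tangent set
  set RT := fsOf {x : Fin (3 * n) → F |
    x ∈ C ∨ ∀ Y ∈ O, Y ≠ C → x ∉ (C ⊔ Y : Submodule F (Fin (3 * n) → F))} with hRTdef
  have hmem_RT : ∀ x, x ∈ RT ↔ (x ∈ C ∨ ∀ Y ∈ O, Y ≠ C →
      x ∉ (C ⊔ Y : Submodule F (Fin (3 * n) → F))) := by
    intro x; rw [hRTdef, mem_fsOf]; rfl
  have hmem_U : ∀ x, x ∈ U ↔ ∃ Y ∈ O, Y ≠ C ∧
      x ∈ (C ⊔ Y : Submodule F (Fin (3 * n) → F)) := by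
    intro x
    rw [hUdef, Finset.mem_biUnion]
    constructor
    · rintro ⟨Y, hY, hx⟩
      rw [hmem_s] at hY
      rw [mem_fsOf] at hx
      exact ⟨Y, hY.1, hY.2, hx⟩
    · rintro ⟨Y, hY, hYC, hx⟩
      exact ⟨Y, (hmem_s Y).2 ⟨hY, hYC⟩, by rw [mem_fsOf]; exact hx⟩
  have hunion : RT ∪ U = Finset.univ := by
    apply Finset.eq_univ_of_forall
    intro x
    rw [Finset.mem_union, hmem_RT, hmem_U]
    by_cases hx : ∃ Y ∈ O, Y ≠ C ∧ x ∈ (C ⊔ Y : Submodule F (Fin (3 * n) → F))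
    · exact Or.inr hx
    · push_neg at hx
      exact Or.inl (Or.inr hx)
  have hinter : RT ∩ U = fsOf (C : Set (Fin (3 * n) → F)) := by
    ext x
    rw [Finset.mem_inter, hmem_RT, hmem_U, mem_fsOf]
    constructor
    · rintro ⟨hx1 | hx1, ⟨Y, hY, hYC, hx2⟩⟩
      · exact hx1
      · exact absurd hx2 (hx1 Y hY hYC)
    · intro hx
      obtain ⟨Y, hY⟩ := hs
      rw [hmem_s] at hY
      exact ⟨Or.inl hx, ⟨Y, hY.1, hY.2, Submodule.mem_sup_left hx⟩⟩
  have hsum : RT.card + U.card = Fintype.card F ^ (3 * n) + Q := by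
    have h := Finset.card_union_add_card_inter RT U
    rw [hunion, hinter, card_univ_V, card_submodule, hO.2.1 C hC, ← hQdef] at h
    exact h.symm
  have hTsub : fsOf (T : Set (Fin (3 * n) → F)) ⊆ RT := by
    intro x hx
    rw [mem_fsOf] at hx
    rw [hmem_RT]
    by_cases hxC : x ∈ C
    · exact Or.inl hxC
    · refine Or.inr fun Y hY hYC hxCY => hxC ?_
      have := tangent_inf_secant hT hY hYC
      rw [← this]
      exact Submodule.mem_inf.mpr ⟨hx, hxCY⟩
  have hTcard : (fsOf (T : Set (Fin (3 * n) → F))).card = A := by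
    rw [card_submodule, hT.1, hAdef]
  -- conclude RT = T by cardinality
  have hQA : Q * Q = A := by rw [hQdef, hAdef]; exact pow_two_n
  have hB : Q * A = Fintype.card F ^ (3 * n) := by rw [hQdef, hAdef]; exact pow_three_n
  have hRTcard : RT.card = A := by
    obtain ⟨QA, hQA'⟩ : ∃ x, Q * A = x := ⟨_, rfl⟩
    rw [hQA', hQA] at hU
    rw [← hB, hQA'] at hsum
    omega
  have heq := Finset.eq_of_subset_of_card_le hTsub (by rw [hTcard, hRTcard])
  have : v ∈ RT := by
    rw [hmem_RT]; exact Or.inr hv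
  rw [← heq, mem_fsOf] at this
  exact this

end PO2

section PO3

set_option linter.unusedSectionVars false
set_option maxHeartbeats 1000000

variable {F : Type*} [Field F] [Fintype F] {n : ℕ}
variable {O : Set (Submodule F (Fin (3 * n) → F))}

open Classical in
/-- The trace of the (potential) tangent space at `E` on the subspace `W`:
vectors of `W` lying on no secant through `E`. -/
noncomputable def traceF (O : Set (Submodule F (Fin (3 * n) → F)))
    (W E : Submodule F (Fin (3 * n) → F)) : Finset (Fin (3 * n) → F) :=
  fsOf (W : Set (Fin (3 * n) → F)) \
    ((fsOf O).erase E).biUnion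
      (fun Y => fsOf ((W ⊓ (E ⊔ Y) : Submodule F (Fin (3 * n) → F)) : Set (Fin (3 * n) → F)))

lemma mem_traceF {W E : Submodule F (Fin (3 * n) → F)} {w : Fin (3 * n) → F} :
    w ∈ traceF O W E ↔ (w ∈ W ∧ ∀ Y ∈ O, Y ≠ E →
      w ∉ (E ⊔ Y : Submodule F (Fin (3 * n) → F))) := by
  classical
  rw [traceF, Finset.mem_sdiff, mem_fsOf]
  constructor
  · rintro ⟨hwW, h2⟩
    refine ⟨hwW, fun Y hY hYE hwEY => h2 ?_⟩
    rw [Finset.mem_biUnion]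
    refine ⟨Y, Finset.mem_erase.2 ⟨hYE, mem_fsOf.2 hY⟩, mem_fsOf.2 ?_⟩
    exact Submodule.mem_inf.mpr ⟨hwW, hwEY⟩
  · rintro ⟨hwW, h2⟩
    refine ⟨hwW, fun hmem => ?_⟩
    rw [Finset.mem_biUnion] at hmem
    obtain ⟨Y, hY, hw⟩ := hmem
    rw [Finset.mem_erase, mem_fsOf] at hY
    rw [mem_fsOf] at hw
    exact h2 Y hY.2 hY.1 (Submodule.mem_inf.mp hw).2

lemma traceF_card (hO : IsPseudoOval F n O) (hn : 1 ≤ n)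
    {C D E : Submodule F (Fin (3 * n) → F)} (hC : C ∈ O) (hD : D ∈ O) (hCD : C ≠ D)
    (hEO : E ∈ O) (hEC : E ≠ C) (hED : E ≠ D) :
    (traceF O (C ⊔ D) E).card = Fintype.card F ^ n - 1 := by
  classical
  set Qn := Fintype.card F ^ n with hQdef
  set W := (C ⊔ D : Submodule F (Fin (3 * n) → F)) with hWdef
  have hrankW : Module.finrank F ↥W = 2 * n := rank_sup_two hO hn hC hD hCD
  have hWE : E ⊓ W = ⊥ := by
    have htop : E ⊔ W = ⊤ := by
      rw [hWdef, ← sup_assoc]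
      exact hO.2.2 E hEO C hC D hD hEC hED hCD
    have e := Submodule.finrank_sup_add_finrank_inf_eq E W
    rw [htop, rank_top_V, hrankW, hO.2.1 E hEO] at e
    exact Submodule.finrank_eq_zero.1 (by omega)
  have hsE : ((fsOf O).erase E).Nonempty :=
    ⟨C, Finset.mem_erase.2 ⟨Ne.symm hEC, mem_fsOf.2 hC⟩⟩
  have hsEcard : ((fsOf O).erase E).card = Qn := by
    rw [Finset.card_erase_of_mem (mem_fsOf.2 hEO), OF_card hO, hQdef]
    omega
  have hmemE : ∀ Y, Y ∈ (fsOf O).erase E ↔ Y ∈ O ∧ Y ≠ E := by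
    intro Y; rw [Finset.mem_erase, mem_fsOf]; tauto
  have hdisj : ∀ P ∈ (fsOf O).erase E, ∀ R ∈ (fsOf O).erase E, P ≠ R →
      (W ⊓ (E ⊔ P)) ⊓ (W ⊓ (E ⊔ R)) ≤ (⊥ : Submodule F (Fin (3 * n) → F)) := by
    intro P hP R hR hne
    rw [hmemE] at hP hR
    have h1 : (W ⊓ (E ⊔ P)) ⊓ (W ⊓ (E ⊔ R)) ≤ E ⊓ W := by
      apply le_inf
      · calc (W ⊓ (E ⊔ P)) ⊓ (W ⊓ (E ⊔ R)) ≤ (E ⊔ P) ⊓ (E ⊔ R) :=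
            inf_le_inf inf_le_right inf_le_right
        _ = E := secant_inf hO hn hEO hP.1 hR.1 (Ne.symm hP.2) (Ne.symm hR.2) hne
      · exact le_trans inf_le_left inf_le_left
    rw [hWE] at h1
    exact h1
  have hm : ∀ Y ∈ (fsOf O).erase E,
      (fsOf ((W ⊓ (E ⊔ Y) : Submodule F (Fin (3 * n) → F)) : Set (Fin (3 * n) → F))).card
        = Qn := by
    intro Y hY
    rw [hmemE] at hY
    have htop : W ⊔ (E ⊔ Y) = ⊤ := by
      apply le_antisymm le_top
      rw [← hO.2.2 E hEO C hC D hD hEC hED hCD]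
      have h1 : E ≤ W ⊔ (E ⊔ Y) := le_sup_left.trans le_sup_right
      have h2 : C ≤ W ⊔ (E ⊔ Y) := by
        rw [hWdef]
        exact le_sup_left.trans le_sup_left
      have h3 : D ≤ W ⊔ (E ⊔ Y) := by
        rw [hWdef]
        exact le_sup_right.trans le_sup_left
      exact sup_le (sup_le h1 h2) h3
    have e := Submodule.finrank_sup_add_finrank_inf_eq W (E ⊔ Y)
    rw [htop, rank_top_V, hrankW, rank_sup_two hO hn hEO hY.1 (Ne.symm hY.2)] at e
    rw [card_submodule]
    have hrk : Module.finrank F ↥(W ⊓ (E ⊔ Y)) = n := by omega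
    rw [hrk, hQdef]
  have hcore := card_biUnion_core ((fsOf O).erase E) hsE ⊥
    (fun Y => W ⊓ (E ⊔ Y)) Qn 1
    (fun P _ => bot_le) hdisj hm
    (by rw [card_submodule, finrank_bot, pow_zero])
    (by rw [hQdef]; exact Nat.one_le_pow _ _ Fintype.card_pos)
  rw [hsEcard, mul_one] at hcore
  have hsub : ((fsOf O).erase E).biUnion
      (fun Y => fsOf ((W ⊓ (E ⊔ Y) : Submodule F (Fin (3 * n) → F)) : Set (Fin (3 * n) → F)))
      ⊆ fsOf (W : Set (Fin (3 * n) → F)) := by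
    intro x hx
    rw [Finset.mem_biUnion] at hx
    obtain ⟨Y, hY, hx⟩ := hx
    rw [mem_fsOf] at hx ⊢
    exact hx.1
  have hsd := Finset.card_sdiff_add_card_eq_card hsub
  have hWcard : (fsOf (W : Set (Fin (3 * n) → F))).card = Qn * Qn := by
    rw [card_submodule, hrankW, hQdef, pow_two_n]
  have htr : (traceF O W E).card
      + (((fsOf O).erase E).biUnion
        (fun Y => fsOf ((W ⊓ (E ⊔ Y) : Submodule F (Fin (3 * n) → F)) : Set (Fin (3 * n) → F)))).card
      = (fsOf (W : Set (Fin (3 * n) → F))).card := by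
    rw [traceF]
    convert hsd using 3
  obtain ⟨P2, hP2⟩ : ∃ P2, Qn * Qn = P2 := ⟨_, rfl⟩
  rw [hP2] at hcore hWcard
  clear_value Qn W
  beta_reduce at hcore
  omega

end PO3

section PO4

set_option linter.unusedSectionVars false
set_option maxHeartbeats 1000000

variable {F : Type*} [Field F] [Fintype F] {n : ℕ}
variable {O : Set (Submodule F (Fin (3 * n) → F))}

/-- The central counting lemma: a nonzero vector lying in two tangent spaces (at distinct
elements) lies on no secant of the pseudo-oval. -/
lemma no_secant (hO : IsPseudoOval F n O) (hq : Even (Fintype.card F)) (hn : 1 ≤ n)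
    {A B Ta Tb : Submodule F (Fin (3 * n) → F)} (hA : A ∈ O) (hB : B ∈ O) (hAB : A ≠ B)
    (hTa : IsTangent F n O A Ta) (hTb : IsTangent F n O B Tb)
    {v : Fin (3 * n) → F} (hva : v ∈ Ta) (hvb : v ∈ Tb) (hv0 : v ≠ 0)
    {C D : Submodule F (Fin (3 * n) → F)} (hC : C ∈ O) (hD : D ∈ O) (hCD : C ≠ D) :
    v ∉ (C ⊔ D : Submodule F (Fin (3 * n) → F)) := by
  classical
  intro hvCD
  set Qn := Fintype.card F ^ n with hQdef
  have hQ2 : 2 ≤ Qn := by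
    rw [hQdef]
    calc 2 = 2 ^ 1 := rfl
    _ ≤ Fintype.card F ^ n :=
      (Nat.pow_le_pow_left Fintype.one_lt_card 1).trans
        (Nat.pow_le_pow_right (by have := Fintype.one_lt_card (α := F); omega) hn)
  -- v is in no element of O
  have hvnotO : ∀ X ∈ O, v ∉ X := by
    intro X hX hvX
    by_cases hXA : X = A
    · subst hXA
      have h' : v ∈ Tb ⊓ X := Submodule.mem_inf.mpr ⟨hvb, hvX⟩
      rw [hTb.2.2 X hX hAB] at h'
      exact hv0 (Submodule.mem_bot _ |>.1 h')
    · have h' : v ∈ Ta ⊓ X := Submodule.mem_inf.mpr ⟨hva, hvX⟩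
      rw [hTa.2.2 X hX hXA] at h'
      exact hv0 (Submodule.mem_bot _ |>.1 h')
  -- v is on no secant through A, nor through B
  have hsecA : ∀ Y ∈ O, Y ≠ A → v ∉ (A ⊔ Y : Submodule F (Fin (3 * n) → F)) := by
    intro Y hY hYA hvAY
    apply hvnotO A hA
    rw [← tangent_inf_secant hTa hY hYA]
    exact Submodule.mem_inf.mpr ⟨hva, hvAY⟩
  have hsecB : ∀ Y ∈ O, Y ≠ B → v ∉ (B ⊔ Y : Submodule F (Fin (3 * n) → F)) := by
    intro Y hY hYB hvBY
    apply hvnotO B hB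
    rw [← tangent_inf_secant hTb hY hYB]
    exact Submodule.mem_inf.mpr ⟨hvb, hvBY⟩
  -- hence C, D are distinct from A and B
  have hCA : C ≠ A := by
    rintro rfl; exact hsecA D hD (fun h => hCD h.symm) hvCD
  have hDA : D ≠ A := by
    rintro rfl; exact hsecA C hC hCD (sup_comm C D ▸ hvCD)
  have hCB : C ≠ B := by
    rintro rfl; exact hsecB D hD (fun h => hCD h.symm) hvCD
  have hDB : D ≠ B := by
    rintro rfl; exact hsecB C hC hCD (sup_comm C D ▸ hvCD)
  set W := (C ⊔ D : Submodule F (Fin (3 * n) → F)) with hWdef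
  have hrankW : Module.finrank F ↥W = 2 * n := rank_sup_two hO hn hC hD hCD
  -- every element of O other than C, D meets W trivially
  have hWXv : ∀ X ∈ O, X ≠ C → X ≠ D → ∀ w, w ∈ W → w ∈ X → w = 0 := by
    intro X hX hXC hXD w hwW hwX
    have htop : X ⊔ W = ⊤ := by
      rw [hWdef, ← sup_assoc]
      exact hO.2.2 X hX C hC D hD hXC hXD hCD
    have e := Submodule.finrank_sup_add_finrank_inf_eq X W
    rw [htop, rank_top_V, hrankW, hO.2.1 X hX] at e
    have hbot : X ⊓ W = ⊥ := Submodule.finrank_eq_zero.1 (by omega)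
    have h' : w ∈ X ⊓ W := Submodule.mem_inf.mpr ⟨hwX, hwW⟩
    rw [hbot] at h'
    exact Submodule.mem_bot _ |>.1 h'
  -- index set: elements of O other than C, D
  set s' := ((fsOf O).erase C).erase D with hs'def
  have hmem_s' : ∀ E, E ∈ s' ↔ E ∈ O ∧ E ≠ C ∧ E ≠ D := by
    intro E
    rw [hs'def, Finset.mem_erase, Finset.mem_erase, mem_fsOf]
    tauto
  have hs'card : s'.card = Qn - 1 := by
    rw [hs'def, Finset.card_erase_of_mem
        (Finset.mem_erase.2 ⟨hCD.symm, mem_fsOf.2 hD⟩),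
      Finset.card_erase_of_mem (mem_fsOf.2 hC), OF_card hO, hQdef]
    omega
  -- the set of vectors of W outside all elements of O
  set WoffF := fsOf (W : Set (Fin (3 * n) → F)) \
    (fsOf (C : Set (Fin (3 * n) → F)) ∪ fsOf (D : Set (Fin (3 * n) → F))) with hWoffdef
  have hmem_Woff : ∀ w, w ∈ WoffF ↔ w ∈ W ∧ w ∉ C ∧ w ∉ D := by
    intro w
    rw [hWoffdef, Finset.mem_sdiff, Finset.mem_union, mem_fsOf, mem_fsOf, mem_fsOf]
    simp only [SetLike.mem_coe]
    tauto
  have hWoffnot : ∀ w ∈ WoffF, ∀ X ∈ O, w ∉ X := by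
    intro w hw X hX hwX
    rw [hmem_Woff] at hw
    by_cases hXC : X = C
    · exact hw.2.1 (hXC ▸ hwX)
    by_cases hXD : X = D
    · exact hw.2.2 (hXD ▸ hwX)
    have h0 := hWXv X hX hXC hXD w hw.1 hwX
    subst h0
    exact hw.2.1 (Submodule.zero_mem C)
  have hWoffcard : WoffF.card + (Qn + Qn - 1) = Qn * Qn := by
    have hsubCD : fsOf (C : Set (Fin (3 * n) → F)) ∪ fsOf (D : Set (Fin (3 * n) → F))
        ⊆ fsOf (W : Set (Fin (3 * n) → F)) := by
      intro x hx
      rw [Finset.mem_union, mem_fsOf, mem_fsOf] at hx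
      rw [mem_fsOf]
      rcases hx with hx | hx
      · exact Submodule.mem_sup_left hx
      · exact Submodule.mem_sup_right hx
    have hint : fsOf (C : Set (Fin (3 * n) → F)) ∩ fsOf (D : Set (Fin (3 * n) → F))
        = {(0 : Fin (3 * n) → F)} := by
      ext x
      rw [Finset.mem_inter, mem_fsOf, mem_fsOf, Finset.mem_singleton]
      simp only [SetLike.mem_coe]
      constructor
      · rintro ⟨h1, h2⟩
        have h' : x ∈ C ⊓ D := Submodule.mem_inf.mpr ⟨h1, h2⟩
        rw [inf_two hO hn hC hD hCD] at h'
        exact Submodule.mem_bot _ |>.1 h'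
      · rintro rfl
        exact ⟨Submodule.zero_mem _, Submodule.zero_mem _⟩
    have hu := Finset.card_union_add_card_inter
      (fsOf (C : Set (Fin (3 * n) → F))) (fsOf (D : Set (Fin (3 * n) → F)))
    rw [hint, Finset.card_singleton, card_submodule, card_submodule,
      hO.2.1 C hC, hO.2.1 D hD, ← hQdef] at hu
    have hsd := Finset.card_sdiff_add_card_eq_card hsubCD
    rw [← hWoffdef] at hsd
    have hWcard : (fsOf (W : Set (Fin (3 * n) → F))).card = Qn * Qn := by
      rw [card_submodule, hrankW, hQdef, pow_two_n]
    omega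
  -- tangent traces live inside WoffF
  have hAEsub : ∀ E ∈ s', traceF O W E ⊆ WoffF := by
    intro E hE w hw
    rw [hmem_s'] at hE
    rw [mem_traceF] at hw
    rw [hmem_Woff]
    refine ⟨hw.1, fun hwC => ?_, fun hwD => ?_⟩
    · exact hw.2 C hC (Ne.symm hE.2.1) (Submodule.mem_sup_right hwC)
    · exact hw.2 D hD (Ne.symm hE.2.2) (Submodule.mem_sup_right hwD)
  -- double counting
  have hswap : ∑ E ∈ s', (traceF O W E).card
      = ∑ w ∈ WoffF, (s'.filter (fun E => w ∈ traceF O W E)).card := by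
    have h1 : ∀ E ∈ s', (traceF O W E).card
        = ∑ w ∈ WoffF, (if w ∈ traceF O W E then 1 else 0) := by
      intro E hE
      rw [Finset.sum_boole]
      congr 1
      rw [Finset.filter_mem_eq_inter, Finset.inter_eq_right.mpr (hAEsub E hE)]
    rw [Finset.sum_congr rfl h1, Finset.sum_comm]
    apply Finset.sum_congr rfl
    intro w _
    rw [Finset.sum_boole]
    exact Nat.cast_id _
  -- every element of WoffF is in at least one tangent trace (parity!)
  have hone : ∀ w ∈ WoffF, 1 ≤ (s'.filter (fun E => w ∈ traceF O W E)).card := by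
    intro w hw
    have hwW : w ∈ W := ((hmem_Woff w).1 hw).1
    have hwnot : ∀ X ∈ O, w ∉ X := hWoffnot w hw
    set Bad := (fsOf O).filter (fun E => ∃ Y ∈ O, Y ≠ E ∧
      w ∈ (E ⊔ Y : Submodule F (Fin (3 * n) → F))) with hBaddef
    have hpu : ∀ E ∈ O, ∀ Y ∈ O, ∀ Y' ∈ O, Y ≠ E → Y' ≠ E →
        w ∈ (E ⊔ Y : Submodule F (Fin (3 * n) → F)) →
        w ∈ (E ⊔ Y' : Submodule F (Fin (3 * n) → F)) → Y = Y' := by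
      intro E hE Y hY Y' hY' hYE hY'E hw1 hw2
      by_contra hne
      have h' : w ∈ (E ⊔ Y) ⊓ (E ⊔ Y') := Submodule.mem_inf.mpr ⟨hw1, hw2⟩
      rw [secant_inf hO hn hE hY hY' (Ne.symm hYE) (Ne.symm hY'E) hne] at h'
      exact hwnot E hE h'
    set σ := fun E : Submodule F (Fin (3 * n) → F) =>
      if h : ∃ Y, Y ∈ O ∧ Y ≠ E ∧ w ∈ (E ⊔ Y : Submodule F (Fin (3 * n) → F))
      then h.choose else E with hσdef
    have hσspec : ∀ E ∈ Bad, σ E ∈ O ∧ σ E ≠ E ∧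
        w ∈ (E ⊔ σ E : Submodule F (Fin (3 * n) → F)) := by
      intro E hE
      rw [hBaddef, Finset.mem_filter] at hE
      obtain ⟨Y, hY, hYE, hwEY⟩ := hE.2
      have hex : ∃ Y, Y ∈ O ∧ Y ≠ E ∧ w ∈ (E ⊔ Y : Submodule F (Fin (3 * n) → F)) :=
        ⟨Y, hY, hYE, hwEY⟩
      rw [hσdef]
      simp only [dif_pos hex]
      exact hex.choose_spec
    have hσBad : ∀ E ∈ Bad, σ E ∈ Bad := by
      intro E hE
      obtain ⟨h1, h2, h3⟩ := hσspec E hE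
      rw [hBaddef, Finset.mem_filter] at hE ⊢
      refine ⟨mem_fsOf.2 h1, E, mem_fsOf.1 hE.1, Ne.symm h2, ?_⟩
      rw [sup_comm]
      exact h3
    have hσinv : ∀ E ∈ Bad, σ (σ E) = E := by
      intro E hE
      have hEO : E ∈ O := by
        rw [hBaddef, Finset.mem_filter, mem_fsOf] at hE; exact hE.1
      obtain ⟨h1, h2, h3⟩ := hσspec E hE
      obtain ⟨g1, g2, g3⟩ := hσspec (σ E) (hσBad E hE)
      exact hpu (σ E) h1 (σ (σ E)) g1 E hEO g2 (Ne.symm h2) g3 (by rw [sup_comm]; exact h3)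
    have hσne : ∀ E ∈ Bad, σ E ≠ E := fun E hE => (hσspec E hE).2.1
    have heven : Even Bad.card := even_card_of_involution σ Bad hσBad hσinv hσne
    have hGood : 1 ≤ ((fsOf O) \ Bad).card := by
      have hsub : Bad ⊆ fsOf O := Finset.filter_subset _ _
      have hsd := Finset.card_sdiff_add_card_eq_card hsub
      rw [OF_card hO, ← hQdef] at hsd
      obtain ⟨b, hb⟩ := heven
      obtain ⟨m, hm⟩ : Even Qn := by
        rw [hQdef]
        exact hq.pow_of_ne_zero (by omega)
      omega
    obtain ⟨E, hE⟩ := Finset.card_pos.1 hGood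
    rw [Finset.mem_sdiff, hBaddef, Finset.mem_filter, mem_fsOf] at hE
    have hEO : E ∈ O := hE.1
    have hEgood : ∀ Y ∈ O, Y ≠ E → w ∉ (E ⊔ Y : Submodule F (Fin (3 * n) → F)) := by
      intro Y hY hYE hwEY
      exact hE.2 ⟨hEO, Y, hY, hYE, hwEY⟩
    have hEC : E ≠ C := by
      rintro rfl
      exact hEgood D hD hCD.symm hwW
    have hED : E ≠ D := by
      rintro rfl
      exact hEgood C hC hCD (by rw [sup_comm]; exact hwW)
    have hmemfilter : E ∈ s'.filter (fun E => w ∈ traceF O W E) := by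
      rw [Finset.mem_filter]
      exact ⟨(hmem_s' E).2 ⟨hEO, hEC, hED⟩, mem_traceF.2 ⟨hwW, hEgood⟩⟩
    exact Finset.card_pos.2 ⟨E, hmemfilter⟩
  -- v is in at least two tangent traces
  have hvWoff : v ∈ WoffF :=
    (hmem_Woff v).2 ⟨hvCD, hvnotO C hC, hvnotO D hD⟩
  have htwo : 2 ≤ (s'.filter (fun E => v ∈ traceF O W E)).card := by
    have hsub : ({A, B} : Finset (Submodule F (Fin (3 * n) → F)))
        ⊆ s'.filter (fun E => v ∈ traceF O W E) := by
      intro X hX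
      rw [Finset.mem_insert, Finset.mem_singleton] at hX
      rw [Finset.mem_filter]
      rcases hX with rfl | rfl
      · exact ⟨(hmem_s' X).2 ⟨hA, Ne.symm hCA, Ne.symm hDA⟩,
          mem_traceF.2 ⟨hvCD, fun Y hY hYX => hsecA Y hY hYX⟩⟩
      · exact ⟨(hmem_s' X).2 ⟨hB, Ne.symm hCB, Ne.symm hDB⟩,
          mem_traceF.2 ⟨hvCD, fun Y hY hYX => hsecB Y hY hYX⟩⟩
    calc 2 = ({A, B} : Finset (Submodule F (Fin (3 * n) → F))).card :=
        (Finset.card_pair hAB).symm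
    _ ≤ _ := Finset.card_le_card hsub
  -- putting it together: a contradiction
  have htotal : ∑ E ∈ s', (traceF O W E).card = (Qn - 1) * (Qn - 1) := by
    have hAEcard : ∀ E ∈ s', (traceF O W E).card = Qn - 1 := by
      intro E hE
      rw [hmem_s'] at hE
      rw [hWdef, hQdef]
      exact traceF_card hO hn hC hD hCD hE.1 hE.2.1 hE.2.2
    rw [Finset.sum_congr rfl hAEcard, Finset.sum_const, smul_eq_mul, hs'card]
  have hstrict : WoffF.card < ∑ w ∈ WoffF, (s'.filter (fun E => w ∈ traceF O W E)).card := by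
    rw [Finset.card_eq_sum_ones]
    apply Finset.sum_lt_sum hone
    exact ⟨v, hvWoff, by
      have := htwo
      omega⟩
  rw [← hswap, htotal] at hstrict
  -- arithmetic contradiction
  have hid : (Qn - 1) * (Qn - 1) + (Qn + Qn - 1) = Qn * Qn := by
    obtain ⟨m, hm⟩ : ∃ m, Qn = m + 1 := ⟨Qn - 1, by omega⟩
    rw [hm]
    simp only [Nat.add_sub_cancel]
    have h2 : m + 1 + (m + 1) - 1 = 2 * m + 1 := by omega
    rw [h2]
    ring
  obtain ⟨P, hP⟩ : ∃ P, (Qn - 1) * (Qn - 1) = P := ⟨_, rfl⟩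
  obtain ⟨P2, hP2⟩ : ∃ P2, Qn * Qn = P2 := ⟨_, rfl⟩
  rw [hP, hP2] at hid
  rw [hP] at hstrict
  rw [hP2] at hWoffcard
  clear_value Qn
  omega

end PO4

/-- For `q` even, all tangent spaces of an `n`-dimensional pseudo-oval in `PG(3n - 1, q)`
contain a common `(n-1)`-dimensional subspace `N`, the nucleus of the pseudo-oval. -/
theorem pseudoOval_nucleus_exists (F : Type*) [Field F] [Fintype F]
    (hq : Even (Fintype.card F)) (n : ℕ) (hn : 1 ≤ n)
    (O : Set (Submodule F (Fin (3 * n) → F))) (hO : IsPseudoOval F n O) :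
    ∃ N : Submodule F (Fin (3 * n) → F), Module.finrank F N = n ∧
      ∀ X ∈ O, ∀ T : Submodule F (Fin (3 * n) → F), IsTangent F n O X T → N ≤ T := by
  classical
  by_cases h2 : ∃ A ∈ O, ∃ B ∈ O, A ≠ B ∧ (∃ Ta, IsTangent F n O A Ta) ∧
      (∃ Tb, IsTangent F n O B Tb)
  · obtain ⟨A, hA, B, hB, hAB, ⟨Ta, hTa⟩, ⟨Tb, hTb⟩⟩ := h2
    refine ⟨Ta ⊓ Tb, ?_, ?_⟩
    · -- the nucleus has rank n
      have e := Submodule.finrank_sup_add_finrank_inf_eq Ta Tb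
      have hsup : Module.finrank F ↥(Ta ⊔ Tb) ≤ 3 * n := by
        have h := Submodule.finrank_le (Ta ⊔ Tb)
        rwa [finrank_V] at h
      have hinfA : (Ta ⊓ Tb) ⊓ A = ⊥ := by
        rw [← le_bot_iff]
        calc (Ta ⊓ Tb) ⊓ A ≤ Tb ⊓ A := inf_le_inf inf_le_right le_rfl
        _ = ⊥ := hTb.2.2 A hA hAB
      have e2 := Submodule.finrank_sup_add_finrank_inf_eq (Ta ⊓ Tb) A
      rw [hinfA, finrank_bot, hO.2.1 A hA] at e2
      have hle2 : (Ta ⊓ Tb) ⊔ A ≤ Ta := sup_le inf_le_left hTa.2.1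
      have hle2' := Submodule.finrank_mono hle2
      rw [hTa.1, hTb.1] at e
      rw [hTa.1] at hle2'
      omega
    · intro X hX T hT v hv
      obtain ⟨hva, hvb⟩ := Submodule.mem_inf.mp hv
      by_cases hv0 : v = 0
      · subst hv0
        exact Submodule.zero_mem T
      apply tangent_mem_of hO hn hX hT
      intro Y hY hYX
      exact no_secant hO hq hn hA hB hAB hTa hTb hva hvb hv0 hX hY (Ne.symm hYX)
  · push_neg at h2
    by_cases h1 : ∃ A ∈ O, ∃ Ta, IsTangent F n O A Ta
    · obtain ⟨A, hA, Ta, hTa⟩ := h1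
      refine ⟨A, hO.2.1 A hA, ?_⟩
      intro X hX T hT
      by_cases hXA : X = A
      · subst hXA
        exact hT.2.1
      · exact absurd hT (h2 A hA X hX (Ne.symm hXA) ⟨Ta, hTa⟩ T)
    · have hOne : O.Nonempty := by
        rw [Set.nonempty_iff_ne_empty]
        intro h
        have := hO.1
        rw [h] at this
        simp at this
      obtain ⟨X₀, hX₀⟩ := hOne
      refine ⟨X₀, hO.2.1 X₀ hX₀, ?_⟩
      intro X hX T hT
      exact absurd (⟨X, hX, T, hT⟩ : ∃ A ∈ O, ∃ Ta, IsTangent F n O A Ta) h1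
end

section
/- Let L = (P, C, G) be a finite Laguerre plane of order n and let p ∈ P. Then the derived incidence structure at p — with point set the points of P not on the generator through p, and with lines the circles of C through p (with p removed) together with the generators not through p — is an affine plane of order n: every two distinct points lie on a unique line, and every line has exactly n points. -/
/-- A finite Laguerre plane of order `n`: a point set `P` of size `n(n+1)`, a set `C` of
`n^3` circles and a set `G` of `n+1` generators (both subsets of `P`), such that the
generators partition `P` with `n` points each, each circle meets each generator in
exactly one point, and any three points, pairwise not on a common generator, lie on a
unique circle. -/
def IsLaguerre (P : Type*) (n : ℕ) (C G : Set (Set P)) : Prop :=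
  Nat.card P = n * (n + 1) ∧ Nat.card C = n ^ 3 ∧ Nat.card G = n + 1 ∧
  (∀ g ∈ G, Nat.card g = n) ∧
  (∀ p : P, ∃! g, g ∈ G ∧ p ∈ g) ∧
  (∀ c ∈ C, ∀ g ∈ G, ∃! p, p ∈ c ∧ p ∈ g) ∧
  (∀ p₁ p₂ p₃ : P,
    (¬ ∃ g ∈ G, p₁ ∈ g ∧ p₂ ∈ g) → (¬ ∃ g ∈ G, p₁ ∈ g ∧ p₃ ∈ g) →
    (¬ ∃ g ∈ G, p₂ ∈ g ∧ p₃ ∈ g) →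
    ∃! c, c ∈ C ∧ p₁ ∈ c ∧ p₂ ∈ c ∧ p₃ ∈ c)

/-- Derivation of a Laguerre plane at a point `p`: the incidence structure whose points
are the points not on the generator `gp` through `p`, and whose lines are the circles
through `p` (with `p` removed) together with the generators other than `gp`, is an
affine plane of order `n`: any two distinct points lie on a unique line, and every line
has exactly `n` points. -/
theorem laguerre_derived_affine_plane (P : Type*) [Finite P] (n : ℕ) (hn : 2 ≤ n)
    (C G : Set (Set P)) (h : IsLaguerre P n C G)
    (p : P) (gp : Set P) (hgp : gp ∈ G) (hpgp : p ∈ gp) :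
    (∀ x y : P, x ∉ gp → y ∉ gp → x ≠ y →
      ∃! l : Set P,
        ((∃ c ∈ C, p ∈ c ∧ l = c \ {p}) ∨ (∃ g ∈ G, g ≠ gp ∧ l = g)) ∧
        x ∈ l ∧ y ∈ l) ∧
    (∀ l : Set P, ((∃ c ∈ C, p ∈ c ∧ l = c \ {p}) ∨ (∃ g ∈ G, g ≠ gp ∧ l = g)) →
      Nat.card l = n) := by
  obtain ⟨hP, hCcard, hGcard, hgsize, hgen, hmeet, htriple⟩ := h
  -- uniqueness of the generator through a point
  have gen_unique : ∀ x : P, ∀ g₁ ∈ G, ∀ g₂ ∈ G, x ∈ g₁ → x ∈ g₂ → g₁ = g₂ := by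
    intro x g₁ hg1 g₂ hg2 hx1 hx2
    exact (hgen x).unique ⟨hg1, hx1⟩ ⟨hg2, hx2⟩
  -- a point off gp is not parallel to p
  have hnp : ∀ x : P, x ∉ gp → ¬ ∃ g ∈ G, p ∈ g ∧ x ∈ g := by
    rintro x hx ⟨g, hg, hpg, hxg⟩
    exact hx (gen_unique p g hg gp hgp hpg hpgp ▸ hxg)
  -- every circle has n + 1 points
  have hcard_c : ∀ c ∈ C, Nat.card c = n + 1 := by
    intro c hc
    have hcong : Nat.card c = Nat.card G := by
      apply Nat.card_congr
      refine Equiv.ofBijective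
        (fun x => ⟨(hgen (x : P)).exists.choose, (hgen (x : P)).exists.choose_spec.1⟩)
        ⟨?_, ?_⟩
      · rintro ⟨x, hx⟩ ⟨y, hy⟩ hxy
        have hgx := (hgen x).exists.choose_spec
        have hgy := (hgen y).exists.choose_spec
        have hgg : (hgen x).exists.choose = (hgen y).exists.choose :=
          congrArg Subtype.val hxy
        have hxg : x ∈ (hgen y).exists.choose := hgg ▸ hgx.2
        have := (hmeet c hc _ hgy.1).unique ⟨hx, hxg⟩ ⟨hy, hgy.2⟩
        exact Subtype.ext this
      · rintro ⟨g, hgG⟩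
        obtain ⟨q, hq⟩ := (hmeet c hc g hgG).exists
        refine ⟨⟨q, hq.1⟩, ?_⟩
        apply Subtype.ext
        exact (hgen q).unique
          ⟨(hgen q).exists.choose_spec.1, (hgen q).exists.choose_spec.2⟩ ⟨hgG, hq.2⟩
    rw [hcong, hGcard]
  have part2 : ∀ l : Set P,
      ((∃ c ∈ C, p ∈ c ∧ l = c \ {p}) ∨ (∃ g ∈ G, g ≠ gp ∧ l = g)) →
      Nat.card l = n := by
    rintro l (⟨c, hc, hpc, rfl⟩ | ⟨g, hgG, hgne, rfl⟩)
    · have h1 : (c \ {p}).ncard = c.ncard - 1 := Set.ncard_diff_singleton_of_mem hpc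
      have h2 : c.ncard = n + 1 := by
        rw [← Nat.card_coe_set_eq]; exact hcard_c c hc
      rw [Nat.card_coe_set_eq, h1, h2]
      omega
    · exact hgsize l hgG
  refine ⟨?_, part2⟩
  intro x y hx hy hxy
  have hxp : x ≠ p := fun h => hx (h ▸ hpgp)
  have hyp : y ≠ p := fun h => hy (h ▸ hpgp)
  by_cases hpar : ∃ g ∈ G, x ∈ g ∧ y ∈ g
  · obtain ⟨g, hgG, hxg, hyg⟩ := hpar
    have hgne : g ≠ gp := fun h => hx (h ▸ hxg)
    refine ⟨g, ⟨Or.inr ⟨g, hgG, hgne, rfl⟩, hxg, hyg⟩, ?_⟩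
    rintro l ⟨(⟨c, hc, hpc, rfl⟩ | ⟨g', hg'G, hg'ne, rfl⟩), hxl, hyl⟩
    · exact absurd ((hmeet c hc g hgG).unique ⟨hxl.1, hxg⟩ ⟨hyl.1, hyg⟩) hxy
    · exact gen_unique x l hg'G g hgG hxl hxg
  · obtain ⟨c, ⟨hcC, hpc, hxc, hyc⟩, hcu⟩ := htriple p x y (hnp x hx) (hnp y hy) hpar
    refine ⟨c \ {p}, ⟨Or.inl ⟨c, hcC, hpc, rfl⟩, ⟨hxc, hxp⟩, ⟨hyc, hyp⟩⟩, ?_⟩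
    rintro l ⟨(⟨c', hc', hpc', rfl⟩ | ⟨g, hgG, hgne, rfl⟩), hxl, hyl⟩
    · rw [hcu c' ⟨hc', hpc', hxl.1, hyl.1⟩]
    · exact absurd ⟨l, hgG, hxl, hyl⟩ hpar
end

section
/- Let q be a prime power, O an oval in PG(2,q), and K the cone in PG(3,q) with vertex a point V not in the plane of O, projecting O. Then the incidence structure L_2(O) — with points the points of K other than V, generators the q+1 lines of K through V, and circles the intersections with K of planes of PG(3,q) not through V — is a Laguerre plane of order q. -/
open Projectivization
open scoped LinearAlgebra.Projectivization

/-- A finite Laguerre plane of order `n` with point set `P` (a set inside an ambient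
type): `P` has `n(n+1)` points, there are `n^3` circles and `n+1` generators (subsets of
`P`), the generators partition `P` with `n` points each, each circle meets each
generator in exactly one point, and any three pairwise non-parallel points lie on a
unique circle. -/
def IsLaguerreOn {X : Type*} (P : Set X) (n : ℕ) (C G : Set (Set X)) : Prop :=
  Nat.card P = n * (n + 1) ∧ Nat.card C = n ^ 3 ∧ Nat.card G = n + 1 ∧
  (∀ c ∈ C, c ⊆ P) ∧ (∀ g ∈ G, g ⊆ P) ∧
  (∀ g ∈ G, Nat.card g = n) ∧
  (∀ p ∈ P, ∃! g, g ∈ G ∧ p ∈ g) ∧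
  (∀ c ∈ C, ∀ g ∈ G, ∃! x, x ∈ c ∧ x ∈ g) ∧
  (∀ p₁ ∈ P, ∀ p₂ ∈ P, ∀ p₃ ∈ P,
    (¬ ∃ g ∈ G, p₁ ∈ g ∧ p₂ ∈ g) → (¬ ∃ g ∈ G, p₁ ∈ g ∧ p₃ ∈ g) →
    (¬ ∃ g ∈ G, p₂ ∈ g ∧ p₃ ∈ g) →
    ∃! c, c ∈ C ∧ p₁ ∈ c ∧ p₂ ∈ c ∧ p₃ ∈ c)

/-!
A point `p ≠ v` of the cone lies on the line through `v` and some `o ∈ O`, so `o` lies in the span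
of `v` and `p` (exchange lemma). Hence if `o₁, …, oₖ ∈ O` are independent and `pᵢ ≠ v` lies on the
line `v oᵢ`, the family `v, p₁, …, pₖ` spans the same space as `v, o₁, …, oₖ`, which is independent
because `v` is off the plane of `O`. With `k = 2` this says that distinct generators are disjoint;
with `k = 3` (three points of an oval are independent) it says that three points on distinct
generators span a plane avoiding `v`, the only plane through them. A plane avoiding `v` meets each
line `v o` in exactly one point, and it is determined by its circle, since the circle contains
three points on distinct generators. The counts follow: `q` points on each of the `q + 1`
generators, and `q³` planes avoiding `v`, namely the kernels of the functionals `φ` with `φ v = 1`.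
-/

open Module Submodule

namespace Projectivization

variable {K V : Type*} [Field K] [AddCommGroup V] [Module K V]

theorem ne_of_rep_mem_of_rep_notMem {p q : ℙ K V} {U : Submodule K V} (hp : p.rep ∈ U)
    (hq : q.rep ∉ U) : p ≠ q :=
  fun h => hq (h ▸ hp)

theorem rep_mem_iff_eq_mk'' (U : Submodule K V) (h : finrank K U = 1) (p : ℙ K V) :
    p.rep ∈ U ↔ p = mk'' U h := by
  have : FiniteDimensional K U := Module.finite_of_finrank_eq_succ h
  rw [← span_singleton_le_iff_mem, ← submodule_eq, ← submodule_injective.eq_iff, submodule_mk'']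
  exact ⟨fun hle => eq_of_le_of_finrank_eq hle (by rw [finrank_submodule, h]), le_of_eq⟩

theorem existsUnique_rep_mem (U : Submodule K V) (h : finrank K U = 1) :
    ∃! p : ℙ K V, p.rep ∈ U :=
  ⟨mk'' U h, (rep_mem_iff_eq_mk'' U h _).2 rfl, fun _ hp => (rep_mem_iff_eq_mk'' U h _).1 hp⟩

theorem rep_mem_span_rep_iff {p q : ℙ K V} : p.rep ∈ K ∙ q.rep ↔ p = q := by
  rw [← submodule_eq, rep_mem_iff_eq_mk'' _ q.finrank_submodule, mk''_submodule]

theorem range_map_subtype (U : Submodule K V) :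
    Set.range (map U.subtype U.injective_subtype) = {p | p.rep ∈ U} := by
  ext p
  refine ⟨?_, fun hp => ⟨mk K ⟨p.rep, hp⟩ (by simpa using p.rep_nonzero), ?_⟩⟩
  · rintro ⟨u, rfl⟩
    induction u using ind with
    | h u hu =>
      obtain ⟨a, ha⟩ := exists_smul_eq_mk_rep K (U.subtype u) (by simpa using hu)
      simp only [Set.mem_ofPred_eq, map_mk, ← ha]
      exact U.smul_mem _ u.2
  · simp [map_mk, mk_rep]

theorem card_setOf_rep_mem (U : Submodule K V) :
    Nat.card {p : ℙ K V | p.rep ∈ U} = Nat.card (ℙ K U) := by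
  rw [← range_map_subtype]
  exact Nat.card_range_of_injective (map_injective (σ := RingHom.id K) (τ := RingHom.id K) _ _)

end Projectivization

section LinearAlgebra

variable {K V : Type*} [Field K] [AddCommGroup V] [Module K V]

theorem linearIndependent_finCons_of_notMem {n : ℕ} {f : Fin n → V} {x : V}
    {H : Submodule K V} (hf : LinearIndependent K f) (hfH : ∀ i, f i ∈ H) (hx : x ∉ H) :
    LinearIndependent K (Fin.cons x f : Fin (n + 1) → V) :=
  linearIndependent_finCons.2 ⟨hf, fun h => hx (span_le.2 (Set.range_subset_iff.2 hfH) h)⟩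

theorem LinearIndependent.finCons_of_mem_span_pair {n : ℕ} {f g : Fin n → V} {x : V}
    (h : LinearIndependent K (Fin.cons x f : Fin (n + 1) → V))
    (hg : ∀ i, g i ∈ span K {x, f i}) (hgx : ∀ i, g i ∉ K ∙ x) :
    LinearIndependent K (Fin.cons x g : Fin (n + 1) → V) := by
  rw [linearIndependent_iff_card_eq_finrank_span] at h
  rw [linearIndependent_iff_card_le_finrank_span, h]
  have hle : span K (Set.range (Fin.cons x f : Fin (n + 1) → V))
      ≤ span K (Set.range (Fin.cons x g : Fin (n + 1) → V)) := by
    refine span_le.2 (Set.range_subset_iff.2 (Fin.cases (subset_span ⟨0, rfl⟩) fun i => ?_))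
    have hfi : f i ∈ span K (insert (g i) {x}) :=
      mem_span_insert_exchange (by rw [Set.pair_comm]; exact hg i) (hgx i)
    refine span_mono ?_ hfi
    rintro y (rfl | rfl)
    exacts [⟨i.succ, rfl⟩, ⟨0, rfl⟩]
  have : FiniteDimensional K (span K (Set.range (Fin.cons x g : Fin (n + 1) → V))) :=
    .span_of_finite K (Set.finite_range _)
  exact finrank_mono hle

theorem LinearIndependent.span_eq_of_forall_mem {ι : Type*} [Fintype ι] {f : ι → V}
    (hf : LinearIndependent K f) {W : Submodule K V} [FiniteDimensional K W]
    (hW : finrank K W = Fintype.card ι) (hfW : ∀ i, f i ∈ W) :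
    span K (Set.range f) = W :=
  eq_of_le_of_finrank_eq (span_le.2 (Set.range_subset_iff.2 hfW))
    (by rw [finrank_span_eq_card hf, hW])

theorem finrank_inf_add_one_of_not_le [FiniteDimensional K V] {W U : Submodule K V}
    (hW : finrank K W + 1 = finrank K V) (hUW : ¬ U ≤ W) :
    finrank K ↥(W ⊓ U) + 1 = finrank K U := by
  have h₁ := finrank_lt_finrank_of_lt (left_lt_sup.2 hUW)
  have h₂ := finrank_le (W ⊔ U)
  have h₃ := finrank_sup_add_finrank_inf_eq W U
  omega

end LinearAlgebra

section Hyperplanes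

variable {K V : Type*} [Field K] [AddCommGroup V] [Module K V] [FiniteDimensional K V] {n : ℕ}

theorem image_ker_setOf_apply_eq_one (hV : finrank K V = n + 1) (x : V) :
    LinearMap.ker '' {φ : Dual K V | φ x = 1} = {W : Submodule K V | finrank K W = n ∧ x ∉ W} := by
  ext W
  constructor
  · rintro ⟨φ, hφ, rfl⟩
    have hφ0 : φ ≠ 0 := by rintro rfl; simp at hφ
    have hrank := Dual.finrank_ker_add_one_of_ne_zero hφ0
    refine ⟨by omega, fun hx => ?_⟩
    simp [LinearMap.mem_ker.1 hx] at hφ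
  · rintro ⟨hW, hxW⟩
    obtain ⟨ψ, hψx, hψW⟩ := W.exists_dual_map_eq_bot_of_notMem hxW inferInstance
    have hψ0 : ψ ≠ 0 := by rintro rfl; simp at hψx
    have hrank := Dual.finrank_ker_add_one_of_ne_zero hψ0
    refine ⟨(ψ x)⁻¹ • ψ, by simp [hψx], ?_⟩
    rw [LinearMap.ker_smul _ _ (inv_ne_zero hψx)]
    exact (eq_of_le_of_finrank_eq (LinearMap.le_ker_iff_map.2 hψW) (by omega)).symm

theorem ncard_setOf_apply_eq_one [Finite K] (hV : finrank K V = n + 1) {x : V} (hx : x ≠ 0) :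
    {φ : Dual K V | φ x = 1}.ncard = Nat.card K ^ n := by
  have hev : Dual.eval K V x ≠ 0 := (eval_apply_eq_zero_iff K x).not.2 hx
  obtain ⟨φ₀, hφ₀⟩ := LinearMap.surjective hev 1
  have e : LinearMap.ker (Dual.eval K V x) ≃ {φ : Dual K V | φ x = 1} :=
    (Equiv.addRight φ₀).subtypeEquiv fun ψ => by simp_all
  have hrank := Dual.finrank_ker_add_one_of_ne_zero hev
  rw [Subspace.dual_finrank_eq, hV, Nat.add_right_cancel_iff] at hrank
  rw [← Nat.card_coe_set_eq, ← Nat.card_congr e, natCard_eq_pow_finrank (K := K), hrank]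

theorem ncard_setOf_finrank_eq_and_notMem [Finite K] (hV : finrank K V = n + 1) {x : V}
    (hx : x ≠ 0) : {W : Submodule K V | finrank K W = n ∧ x ∉ W}.ncard = Nat.card K ^ n := by
  rw [← image_ker_setOf_apply_eq_one hV, Set.InjOn.ncard_image, ncard_setOf_apply_eq_one hV hx]
  intro φ (hφ : φ x = 1) ψ (hψ : ψ x = 1) h
  exact Dual.eq_of_ker_eq_of_apply_eq x h (hφ.trans hψ.symm) (hφ ▸ one_ne_zero)

end Hyperplanes

section Cone

variable {K V : Type*} [Field K] [AddCommGroup V] [Module K V]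

def cone (O : Set (ℙ K V)) (v : ℙ K V) : Set (ℙ K V) :=
  {p | ∃ o ∈ O, p.rep ∈ span K {v.rep, o.rep}}

def generator (v o : ℙ K V) : Set (ℙ K V) :=
  {p | p.rep ∈ span K {v.rep, o.rep}} \ {v}

def coneSection (O : Set (ℙ K V)) (v : ℙ K V) (W : Submodule K V) : Set (ℙ K V) :=
  {p | p ∈ cone O v ∧ p.rep ∈ W}

variable {O : Set (ℙ K V)} {v o : ℙ K V} {H W : Submodule K V}

theorem cone_diff_vertex_eq_biUnion : cone O v \ {v} = ⋃ o ∈ O, generator v o := by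
  ext p
  simp only [cone, generator, Set.mem_sdiff, Set.mem_iUnion, Set.mem_ofPred_eq, exists_prop]
  exact ⟨fun ⟨⟨o, ho, h⟩, hpv⟩ => ⟨o, ho, h, hpv⟩, fun ⟨o, ho, h, hpv⟩ => ⟨⟨o, ho, h⟩, hpv⟩⟩

theorem mem_generator_self (hov : o ≠ v) : o ∈ generator v o :=
  ⟨subset_span (by simp), hov⟩

theorem finrank_span_rep_pair (hvo : v ≠ o) : finrank K (span K {v.rep, o.rep}) = 2 := by
  have hrange : Set.range (Projectivization.rep ∘ ![v, o]) = {v.rep, o.rep} := by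
    rw [Set.range_comp, Matrix.range_cons_cons_empty, Set.image_pair]
  rw [← hrange, finrank_span_eq_card (independent_iff.1 ((independent_pair_iff_ne v o).2 hvo))]
  simp

theorem ncard_generator [Finite K] (hov : o ≠ v) : (generator v o).ncard = Nat.card K := by
  have hline : {p : ℙ K V | p.rep ∈ span K {v.rep, o.rep}}.ncard = Nat.card K + 1 := by
    rw [← Nat.card_coe_set_eq, card_setOf_rep_mem,
      card_of_finrank_two K _ (finrank_span_rep_pair hov.symm)]
  have hv : v ∈ {p : ℙ K V | p.rep ∈ span K {v.rep, o.rep}} := subset_span (Set.mem_insert _ _)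
  rw [generator, Set.ncard_sdiff_singleton_of_mem hv, hline, Nat.add_sub_cancel]

theorem linearIndependent_cons_rep_of_mem_generator {n : ℕ} {o p : Fin n → ℙ K V}
    (ho : Independent o) (hoH : ∀ i, (o i).rep ∈ H) (hv : v.rep ∉ H)
    (hp : ∀ i, p i ∈ generator v (o i)) :
    LinearIndependent K (Fin.cons v.rep (Projectivization.rep ∘ p) : Fin (n + 1) → V) :=
  (linearIndependent_finCons_of_notMem (independent_iff.1 ho) hoH hv).finCons_of_mem_span_pair
    (fun i => (hp i).1) (fun i => rep_mem_span_rep_iff.not.2 (hp i).2)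

theorem eq_of_mem_generator_of_mem_generator {o₁ o₂ p : ℙ K V} (ho₁ : o₁.rep ∈ H)
    (ho₂ : o₂.rep ∈ H) (hv : v.rep ∉ H) (h₁ : p ∈ generator v o₁) (h₂ : p ∈ generator v o₂) :
    o₁ = o₂ := by
  by_contra hne
  -- otherwise `v, p, p` would be linearly independent
  have h := linearIndependent_cons_rep_of_mem_generator (o := ![o₁, o₂]) (p := ![p, p])
    ((independent_pair_iff_ne _ _).2 hne) (by simp [Fin.forall_fin_two, ho₁, ho₂]) hv
    (by simp [Fin.forall_fin_two, h₁, h₂])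
  exact absurd (h.injective (a₁ := 1) (a₂ := 2) rfl) (by decide)

theorem existsUnique_submodule_of_mem_generator [FiniteDimensional K V] {n : ℕ}
    {o p : Fin n → ℙ K V} (ho : Independent o) (hoH : ∀ i, (o i).rep ∈ H) (hv : v.rep ∉ H)
    (hp : ∀ i, p i ∈ generator v (o i)) :
    ∃! W : Submodule K V, finrank K W = n ∧ v.rep ∉ W ∧ ∀ i, (p i).rep ∈ W := by
  obtain ⟨hli, hvS⟩ :=
    linearIndependent_finCons.1 (linearIndependent_cons_rep_of_mem_generator ho hoH hv hp)
  refine ⟨span K (Set.range (Projectivization.rep ∘ p)),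
    ⟨by simp [finrank_span_eq_card hli], hvS, fun i => subset_span ⟨i, rfl⟩⟩,
    fun W ⟨hW, _, hpW⟩ => ?_⟩
  exact (hli.span_eq_of_forall_mem (by simpa using hW) hpW).symm

theorem mem_coneSection_and_mem_generator_iff (ho : o ∈ O) (hvW : v.rep ∉ W) {p : ℙ K V} :
    p ∈ coneSection O v W ∧ p ∈ generator v o ↔ p.rep ∈ W ⊓ span K {v.rep, o.rep} :=
  ⟨fun h => ⟨h.1.2, h.2.1⟩, fun h => ⟨⟨⟨o, ho, h.2⟩, h.1⟩, h.2, fun hpv => hvW (hpv ▸ h.1)⟩⟩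

theorem existsUnique_mem_coneSection_and_mem_generator [FiniteDimensional K V]
    (hW : finrank K W + 1 = finrank K V) (hvW : v.rep ∉ W) (ho : o ∈ O) (hov : o ≠ v) :
    ∃! p, p ∈ coneSection O v W ∧ p ∈ generator v o := by
  have hUW : ¬ span K {v.rep, o.rep} ≤ W := fun h => hvW (h (subset_span (by simp)))
  have h := finrank_inf_add_one_of_not_le hW hUW
  rw [finrank_span_rep_pair hov.symm] at h
  exact (existsUnique_congr fun _ => mem_coneSection_and_mem_generator_iff ho hvW).2
    (existsUnique_rep_mem _ (by omega))

end Cone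

section Laguerre

variable {K V : Type*} [Field K] [AddCommGroup V] [Module K V]

def IsArc (O : Set (ℙ K V)) : Prop :=
  ∀ p₁ ∈ O, ∀ p₂ ∈ O, ∀ p₃ ∈ O, p₁ ≠ p₂ → p₁ ≠ p₃ → p₂ ≠ p₃ → Independent ![p₁, p₂, p₃]

def laguerreCircles (O : Set (ℙ K V)) (v : ℙ K V) : Set (Set (ℙ K V)) :=
  {c | ∃ W : Submodule K V, finrank K W = 3 ∧ v.rep ∉ W ∧ c = coneSection O v W}

def laguerreGenerators (O : Set (ℙ K V)) (v : ℙ K V) : Set (Set (ℙ K V)) :=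
  {g | ∃ o ∈ O, g = generator v o}

variable {O : Set (ℙ K V)} {v : ℙ K V} {H : Submodule K V}

theorem ncard_cone_diff_vertex [Finite K] [FiniteDimensional K V] (hOH : ∀ o ∈ O, o.rep ∈ H)
    (hvH : v.rep ∉ H) : (cone O v \ {v}).ncard = Nat.card K * O.ncard := by
  have hdisj : O.PairwiseDisjoint (generator v) := fun o₁ h₁ o₂ h₂ hne =>
    Set.disjoint_left.2 fun _ hp₁ hp₂ =>
      hne (eq_of_mem_generator_of_mem_generator (hOH o₁ h₁) (hOH o₂ h₂) hvH hp₁ hp₂)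
  have : Finite V := Module.finite_of_finite K
  rw [cone_diff_vertex_eq_biUnion, Set.Finite.ncard_biUnion (Set.toFinite O)
    (fun _ _ => Set.toFinite _) hdisj, ← finsum_one, mul_finsum_mem]
  exact finsum_mem_congr rfl fun o ho => by
    rw [mul_one, ncard_generator (ne_of_rep_mem_of_rep_notMem (hOH o ho) hvH)]

theorem ncard_laguerreGenerators (hOH : ∀ o ∈ O, o.rep ∈ H) (hvH : v.rep ∉ H) :
    (laguerreGenerators O v).ncard = O.ncard := by
  have himage : laguerreGenerators O v = generator v '' O := by
    ext g
    simp only [laguerreGenerators, Set.mem_image, Set.mem_ofPred_eq, eq_comm]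
  rw [himage, Set.InjOn.ncard_image]
  intro o₁ h₁ o₂ h₂ h
  have hself := mem_generator_self (ne_of_rep_mem_of_rep_notMem (hOH o₁ h₁) hvH)
  exact eq_of_mem_generator_of_mem_generator (hOH o₁ h₁) (hOH o₂ h₂) hvH hself (h ▸ hself)

theorem existsUnique_mem_laguerreGenerators (hOH : ∀ o ∈ O, o.rep ∈ H) (hvH : v.rep ∉ H)
    {p : ℙ K V} (hp : p ∈ cone O v \ {v}) : ∃! g, g ∈ laguerreGenerators O v ∧ p ∈ g := by
  rw [cone_diff_vertex_eq_biUnion, Set.mem_iUnion₂] at hp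
  obtain ⟨o, ho, hpo⟩ := hp
  refine ⟨generator v o, ⟨⟨o, ho, rfl⟩, hpo⟩, ?_⟩
  rintro g ⟨⟨o', ho', rfl⟩, hpo'⟩
  rw [eq_of_mem_generator_of_mem_generator (hOH o' ho') (hOH o ho) hvH hpo' hpo]

theorem existsUnique_plane_of_mem_generator [FiniteDimensional K V] (hO : IsArc O)
    (hOH : ∀ o ∈ O, o.rep ∈ H) (hvH : v.rep ∉ H) {o₁ o₂ o₃ p₁ p₂ p₃ : ℙ K V}
    (ho₁ : o₁ ∈ O) (ho₂ : o₂ ∈ O) (ho₃ : o₃ ∈ O) (h₁₂ : o₁ ≠ o₂) (h₁₃ : o₁ ≠ o₃)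
    (h₂₃ : o₂ ≠ o₃) (hp₁ : p₁ ∈ generator v o₁) (hp₂ : p₂ ∈ generator v o₂)
    (hp₃ : p₃ ∈ generator v o₃) :
    ∃! W : Submodule K V, finrank K W = 3 ∧ v.rep ∉ W ∧ p₁.rep ∈ W ∧ p₂.rep ∈ W ∧ p₃.rep ∈ W := by
  simpa [Fin.forall_fin_succ] using existsUnique_submodule_of_mem_generator (H := H)
    (o := ![o₁, o₂, o₃]) (p := ![p₁, p₂, p₃]) (hO o₁ ho₁ o₂ ho₂ o₃ ho₃ h₁₂ h₁₃ h₂₃)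
    (by simp [Fin.forall_fin_succ, *]) hvH (by simp [Fin.forall_fin_succ, *])

theorem coneSection_injOn [FiniteDimensional K V] (hV : finrank K V = 4) (hO : IsArc O)
    (hO₃ : 2 < O.ncard) (hOH : ∀ o ∈ O, o.rep ∈ H) (hvH : v.rep ∉ H) :
    Set.InjOn (coneSection O v) {W | finrank K W = 3 ∧ v.rep ∉ W} := by
  obtain ⟨o₁, o₂, o₃, ho₁, ho₂, ho₃, h₁₂, h₁₃, h₂₃⟩ :=
    Set.two_lt_ncard_iff (Set.finite_of_ncard_pos (by omega)) |>.1 hO₃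
  rintro W₁ ⟨hW₁, hvW₁⟩ W₂ ⟨hW₂, hvW₂⟩ hc
  have hmeet : ∀ o ∈ O, ∃ p, p ∈ coneSection O v W₁ ∧ p ∈ generator v o := fun o ho =>
    (existsUnique_mem_coneSection_and_mem_generator (by omega) hvW₁ ho
      (ne_of_rep_mem_of_rep_notMem (hOH o ho) hvH)).exists
  obtain ⟨p₁, hp₁W, hp₁⟩ := hmeet o₁ ho₁
  obtain ⟨p₂, hp₂W, hp₂⟩ := hmeet o₂ ho₂
  obtain ⟨p₃, hp₃W, hp₃⟩ := hmeet o₃ ho₃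
  have hmem : ∀ p ∈ coneSection O v W₁, p.rep ∈ W₂ := fun p hp => (hc ▸ hp).2
  exact (existsUnique_plane_of_mem_generator hO hOH hvH ho₁ ho₂ ho₃ h₁₂ h₁₃ h₂₃ hp₁ hp₂ hp₃).unique
    ⟨hW₁, hvW₁, hp₁W.2, hp₂W.2, hp₃W.2⟩ ⟨hW₂, hvW₂, hmem _ hp₁W, hmem _ hp₂W, hmem _ hp₃W⟩

theorem ncard_laguerreCircles [Finite K] [FiniteDimensional K V] (hV : finrank K V = 4)
    (hO : IsArc O) (hO₃ : 2 < O.ncard) (hOH : ∀ o ∈ O, o.rep ∈ H) (hvH : v.rep ∉ H) :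
    (laguerreCircles O v).ncard = Nat.card K ^ 3 := by
  have himage : laguerreCircles O v = coneSection O v '' {W | finrank K W = 3 ∧ v.rep ∉ W} := by
    ext c
    simp only [laguerreCircles, Set.mem_image, Set.mem_ofPred_eq, and_assoc, eq_comm]
  rw [himage, (coneSection_injOn hV hO hO₃ hOH hvH).ncard_image,
    ncard_setOf_finrank_eq_and_notMem hV v.rep_nonzero]

theorem existsUnique_mem_laguerreCircles [FiniteDimensional K V] (hO : IsArc O)
    (hOH : ∀ o ∈ O, o.rep ∈ H) (hvH : v.rep ∉ H) {p₁ p₂ p₃ : ℙ K V}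
    (hp₁ : p₁ ∈ cone O v \ {v}) (hp₂ : p₂ ∈ cone O v \ {v}) (hp₃ : p₃ ∈ cone O v \ {v})
    (h₁₂ : ¬ ∃ g ∈ laguerreGenerators O v, p₁ ∈ g ∧ p₂ ∈ g)
    (h₁₃ : ¬ ∃ g ∈ laguerreGenerators O v, p₁ ∈ g ∧ p₃ ∈ g)
    (h₂₃ : ¬ ∃ g ∈ laguerreGenerators O v, p₂ ∈ g ∧ p₃ ∈ g) :
    ∃! c, c ∈ laguerreCircles O v ∧ p₁ ∈ c ∧ p₂ ∈ c ∧ p₃ ∈ c := by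
  rw [cone_diff_vertex_eq_biUnion, Set.mem_iUnion₂] at hp₁ hp₂ hp₃
  obtain ⟨o₁, ho₁, hp₁⟩ := hp₁
  obtain ⟨o₂, ho₂, hp₂⟩ := hp₂
  obtain ⟨o₃, ho₃, hp₃⟩ := hp₃
  have hne : ∀ {o o' p p' : ℙ K V}, o ∈ O → p ∈ generator v o → p' ∈ generator v o' →
      (¬ ∃ g ∈ laguerreGenerators O v, p ∈ g ∧ p' ∈ g) → o ≠ o' :=
    fun ho hp hp' h hoo' => h ⟨_, ⟨_, ho, rfl⟩, hp, hoo' ▸ hp'⟩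
  obtain ⟨W, ⟨hW, hvW, hW₁, hW₂, hW₃⟩, hWu⟩ := existsUnique_plane_of_mem_generator hO hOH hvH
    ho₁ ho₂ ho₃ (hne ho₁ hp₁ hp₂ h₁₂) (hne ho₁ hp₁ hp₃ h₁₃) (hne ho₂ hp₂ hp₃ h₂₃) hp₁ hp₂ hp₃
  refine ⟨coneSection O v W, ⟨⟨W, hW, hvW, rfl⟩, ⟨⟨o₁, ho₁, hp₁.1⟩, hW₁⟩,
    ⟨⟨o₂, ho₂, hp₂.1⟩, hW₂⟩, ⟨⟨o₃, ho₃, hp₃.1⟩, hW₃⟩⟩, ?_⟩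
  rintro c ⟨⟨W', hW', hvW', rfl⟩, hc₁, hc₂, hc₃⟩
  rw [hWu W' ⟨hW', hvW', hc₁.2, hc₂.2, hc₃.2⟩]

theorem isLaguerreOn_cone [Finite K] [FiniteDimensional K V] (hV : finrank K V = 4)
    (hO : IsArc O) (hOcard : Nat.card O = Nat.card K + 1) (hOH : ∀ o ∈ O, o.rep ∈ H)
    (hvH : v.rep ∉ H) :
    IsLaguerreOn (cone O v \ {v}) (Nat.card K) (laguerreCircles O v) (laguerreGenerators O v) := by
  rw [Nat.card_coe_set_eq] at hOcard
  have hov : ∀ o ∈ O, o ≠ v := fun o ho => ne_of_rep_mem_of_rep_notMem (hOH o ho) hvH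
  have hO₃ : 2 < O.ncard := by have := Finite.one_lt_card (α := K); omega
  refine ⟨?_, ?_, ?_, ?_, ?_, ?_, fun p => existsUnique_mem_laguerreGenerators hOH hvH, ?_,
    fun p₁ hp₁ p₂ hp₂ p₃ hp₃ => existsUnique_mem_laguerreCircles hO hOH hvH hp₁ hp₂ hp₃⟩
  · rw [Nat.card_coe_set_eq, ncard_cone_diff_vertex hOH hvH, hOcard]
  · rw [Nat.card_coe_set_eq, ncard_laguerreCircles hV hO hO₃ hOH hvH]
  · rw [Nat.card_coe_set_eq, ncard_laguerreGenerators hOH hvH, hOcard]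
  · rintro c ⟨W, -, hvW, rfl⟩ p ⟨hp, hpW⟩
    exact ⟨hp, fun hpv => hvW (Set.mem_singleton_iff.1 hpv ▸ hpW)⟩
  · rintro g ⟨o, ho, rfl⟩
    rw [cone_diff_vertex_eq_biUnion]
    exact Set.subset_biUnion_of_mem ho
  · rintro g ⟨o, ho, rfl⟩
    rw [Nat.card_coe_set_eq, ncard_generator (hov o ho)]
  · rintro c ⟨W, hW, hvW, rfl⟩ g ⟨o, ho, rfl⟩
    exact existsUnique_mem_coneSection_and_mem_generator (by omega) hvW ho (hov o ho)

end Laguerre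

/-- Let `O` be an oval in a plane `π` of `PG(3, q)` and `V` a point not in `π`. The cone
`K` over `O` with vertex `V` yields a Laguerre plane `L₂(O)` of order `q`: its points
are the points of `K` other than `V`, its generators are the `q + 1` lines of `K`
through `V` (minus `V`), and its circles are the intersections with `K` of the planes of
`PG(3, q)` not through `V`. -/
theorem cone_over_oval_is_laguerre (F : Type*) [Field F] [Fintype F]
    (O : Set (ℙ F (Fin 4 → F)))
    (hplane : ∀ p ∈ O, Projectivization.rep p 3 = 0)
    (hcard : Nat.card O = Fintype.card F + 1)
    (h3 : ∀ p₁ ∈ O, ∀ p₂ ∈ O, ∀ p₃ ∈ O, p₁ ≠ p₂ → p₁ ≠ p₃ → p₂ ≠ p₃ →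
      Independent ![p₁, p₂, p₃])
    (v : ℙ F (Fin 4 → F)) (hv : Projectivization.rep v 3 ≠ 0) :
    IsLaguerreOn
      ({p | ∃ o ∈ O, Projectivization.rep p ∈
          Submodule.span F {Projectivization.rep v, Projectivization.rep o}} \ {v})
      (Fintype.card F)
      {c | ∃ W : Submodule F (Fin 4 → F), Module.finrank F W = 3 ∧
          Projectivization.rep v ∉ W ∧
          c = {p | (∃ o ∈ O, Projectivization.rep p ∈
              Submodule.span F {Projectivization.rep v, Projectivization.rep o}) ∧
            Projectivization.rep p ∈ W}}
      {g | ∃ o ∈ O, g = {p | Projectivization.rep p ∈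
          Submodule.span F {Projectivization.rep v, Projectivization.rep o}} \ {v}} := by
  have h := isLaguerreOn_cone (finrank_fin_fun F) h3 (by rw [hcard, Nat.card_eq_fintype_card])
    (H := LinearMap.ker (LinearMap.proj (R := F) (φ := fun _ : Fin 4 => F) 3)) hplane hv
  rwa [Nat.card_eq_fintype_card] at h
end

section
/- Every oval of PG(2,4) is a conic. Equivalently, up to the action of PGL(3,4), there is a unique oval in PG(2,4), namely {(1,t,t^2) : t ∈ GF(4)} ∪ {(0,0,1)}. -/
open Projectivization
open scoped LinearAlgebra.Projectivization

variable (F : Type*) [Field F]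

/-- The conic `{(1, t, t²) : t ∈ GF(q)} ∪ {(0, 0, 1)}` of `PG(2, q)`. -/
def conic : Set (ℙ F (Fin 3 → F)) :=
  {p | ∃ t : F, p = Projectivization.mk F ![1, t, t ^ 2] (vec_ne_zero₀ F t (t ^ 2))} ∪
    {Projectivization.mk F ![0, 0, 1] (vec_ne_zero₂ F)}


/-!
Five points of `PG(2, F)` in general position can be moved by a projectivity to `e₀`, `e₁`, `e₂`,
`e₀ + e₁ + e₂` and a fifth point `(1, t, u)` with `0, 1, t, u` pairwise distinct. When `|F| = 4`
every element other than `0` and `1` is a root of `X² + X + 1`, so `{t, u}` are the two roots and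
`u = t²`. The conic `{(1, s, s²)} ∪ {(0, 0, 1)}` has exactly the five points with parameters
`0, 1, t, t², ∞`, and an explicit matrix of determinant one sends them to the five points above.
-/

open scoped Pointwise

variable {F}

section GeneralPosition

variable {K V ι : Type*} [Field K] [AddCommGroup V] [Module K V]

def GeneralPosition (p : ι → ℙ K V) : Prop :=
  ∀ i j k, i ≠ j → i ≠ k → j ≠ k → Independent ![p i, p j, p k]

theorem Projectivization.smul_mk_eq_mk (g : V ≃ₗ[K] V) {v w : V} (hv : v ≠ 0) (hw : w ≠ 0)
    {a : K} (h : g v = a • w) : g • mk K v hv = mk K w hw :=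
  (mk_eq_mk_iff' K _ _ _ hw).mpr ⟨a, h.symm⟩

theorem Projectivization.independent_mk_iff {f : ι → V} (hf : ∀ i, f i ≠ 0) :
    Independent (fun i => mk K (f i) (hf i)) ↔ LinearIndependent K f := by
  refine ⟨fun h => ?_, Independent.mk f hf⟩
  choose a ha using fun i => exists_smul_eq_mk_rep K (f i) (hf i)
  have hrep : LinearIndependent K (a • f) := by
    convert independent_iff.mp h using 1
    ext1 i
    exact ha i
  simpa using hrep.units_smul a⁻¹

theorem Projectivization.Independent.smul {f : ι → ℙ K V} (hf : Independent f)
    (g : V ≃ₗ[K] V) : Independent (g • f) := by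
  obtain ⟨v, hv, hl⟩ := hf
  exact Independent.mk (g ∘ v) (fun i => g.map_ne_zero_iff.mpr (hv i))
    (hl.map' g.toLinearMap g.ker)

theorem GeneralPosition.smul {p : ι → ℙ K V} (hp : GeneralPosition p) (g : V ≃ₗ[K] V) :
    GeneralPosition (g • p) := fun i j k hij hik hjk => by
  simpa only [Pi.smul_apply, Matrix.smul_cons, Matrix.smul_empty] using
    (hp i j k hij hik hjk).smul g

theorem GeneralPosition.comp {ι' : Type*} {p : ι → ℙ K V} (hp : GeneralPosition p)
    {f : ι' → ι} (hf : Function.Injective f) : GeneralPosition (p ∘ f) :=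
  fun i j k hij hik hjk => hp (f i) (f j) (f k) (hf.ne hij) (hf.ne hik) (hf.ne hjk)

end GeneralPosition

theorem IsOval.exists_generalPosition_range_eq {q : ℕ} {S : Set (ℙ F (Fin 3 → F))}
    (hS : IsOval F q S) :
    ∃ p : Fin (q + 1) → ℙ F (Fin 3 → F), GeneralPosition p ∧ Set.range p = S := by
  obtain ⟨hcard, hind⟩ := hS
  have : Finite S := Nat.finite_of_card_ne_zero (by omega)
  let e := Finite.equivFinOfCardEq hcard
  have hinj : Function.Injective (Subtype.val ∘ e.symm) :=
    Subtype.val_injective.comp e.symm.injective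
  refine ⟨Subtype.val ∘ e.symm, fun i j k hij hik hjk => ?_, ?_⟩
  · exact hind _ (e.symm i).2 _ (e.symm j).2 _ (e.symm k).2
      (hinj.ne hij) (hinj.ne hik) (hinj.ne hjk)
  · rw [e.symm.surjective.range_comp, Subtype.range_coe]

section StandardFrame

variable (K : Type*) [Field K]

def basisPoint (i : Fin 3) : ℙ K (Fin 3 → K) := mk K (Pi.single i 1) (by simp)

def unitPoint : ℙ K (Fin 3 → K) := mk K 1 one_ne_zero

variable {K}

theorem independent_mk_three_iff_det {u v w : Fin 3 → K} (hu : u ≠ 0) (hv : v ≠ 0)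
    (hw : w ≠ 0) :
    Independent ![mk K u hu, mk K v hv, mk K w hw] ↔ (Matrix.of ![u, v, w]).det ≠ 0 := by
  have hf : ∀ i, ![u, v, w] i ≠ 0 := by simp [Fin.forall_fin_succ, hu, hv, hw]
  have hmk : ![mk K u hu, mk K v hv, mk K w hw] = fun i => mk K (![u, v, w] i) (hf i) := by
    ext1 i; fin_cases i <;> rfl
  rw [hmk, independent_mk_iff, ← isUnit_iff_ne_zero, ← Matrix.isUnit_iff_isUnit_det,
    ← Matrix.linearIndependent_rows_iff_isUnit]
  rfl

theorem exists_smul_basisPoint_eq {p : Fin 3 → ℙ K (Fin 3 → K)} (hp : Independent p) :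
    ∃ g : (Fin 3 → K) ≃ₗ[K] (Fin 3 → K), ∀ i, g • basisPoint K i = p i := by
  let B := basisOfLinearIndependentOfCardEqFinrank (independent_iff.mp hp) (by simp)
  refine ⟨B.equivFun.symm, fun i => ?_⟩
  have hB : B.equivFun.symm (Pi.single i 1) = (p i).rep := by
    simp [B, Module.Basis.equivFun_symm_apply, Pi.single_apply]
  simp only [basisPoint, smul_mk, LinearEquiv.smul_def, hB, mk_rep]

theorem exists_smul_basisPoint_eq_self_and_smul_unitPoint_eq {x : Fin 3 → K}
    (hx : ∀ i, x i ≠ 0) :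
    ∃ g : (Fin 3 → K) ≃ₗ[K] (Fin 3 → K), (∀ i, g • basisPoint K i = basisPoint K i) ∧
      g • unitPoint K = mk K x (fun h => hx 0 (congrFun h 0)) := by
  let d : (Fin 3 → K) ≃ₗ[K] (Fin 3 → K) := .piCongrRight fun i => .smulOfNeZero K K (x i) (hx i)
  refine ⟨d, fun i => smul_mk_eq_mk d _ _ (a := x i) ?_, smul_mk_eq_mk d _ _ (a := 1) ?_⟩
  · ext j; by_cases h : j = i <;> simp [d, h]
  · ext j; simp [d]

theorem GeneralPosition.coord_ne_zero {x : Fin 3 → K} {hx : x ≠ 0}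
    (h : GeneralPosition ![basisPoint K 0, basisPoint K 1, basisPoint K 2, mk K x hx])
    (i : Fin 3) : x i ≠ 0 := by
  have h₀ := h 1 2 3 (by decide) (by decide) (by decide)
  have h₁ := h 0 2 3 (by decide) (by decide) (by decide)
  have h₂ := h 0 1 3 (by decide) (by decide) (by decide)
  simp [basisPoint, independent_mk_three_iff_det, Matrix.det_fin_three] at h₀ h₁ h₂
  fin_cases i <;> assumption

theorem GeneralPosition.injective_of_frame {z : Fin 3 → K} {hz : z ≠ 0}
    (h : GeneralPosition
      ![basisPoint K 0, basisPoint K 1, basisPoint K 2, unitPoint K, mk K z hz]) :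
    Function.Injective z := by
  have h₀ := h 0 3 4 (by decide) (by decide) (by decide)
  have h₁ := h 1 3 4 (by decide) (by decide) (by decide)
  have h₂ := h 2 3 4 (by decide) (by decide) (by decide)
  simp [basisPoint, unitPoint, independent_mk_three_iff_det, Matrix.det_fin_three,
    sub_eq_zero] at h₀ h₁ h₂
  intro i j hij
  fin_cases i <;> fin_cases j <;> simp_all [eq_comm]

theorem GeneralPosition.exists_smul_frame_eq {p : Fin 4 → ℙ K (Fin 3 → K)}
    (hp : GeneralPosition p) : ∃ g : (Fin 3 → K) ≃ₗ[K] (Fin 3 → K),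
      p = g • ![basisPoint K 0, basisPoint K 1, basisPoint K 2, unitPoint K] := by
  obtain ⟨g₀, hg₀⟩ := exists_smul_basisPoint_eq (hp 0 1 2 (by decide) (by decide) (by decide))
  have hq : GeneralPosition ![basisPoint K 0, basisPoint K 1, basisPoint K 2,
      mk K _ (g₀⁻¹ • p 3).rep_nonzero] := by
    convert hp.smul g₀⁻¹ using 1
    ext1 i; fin_cases i
    · exact eq_inv_smul_iff.mpr (hg₀ 0)
    · exact eq_inv_smul_iff.mpr (hg₀ 1)
    · exact eq_inv_smul_iff.mpr (hg₀ 2)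
    · exact mk_rep _
  obtain ⟨d, hd, hd₁⟩ := exists_smul_basisPoint_eq_self_and_smul_unitPoint_eq hq.coord_ne_zero
  refine ⟨g₀ * d, ?_⟩
  ext1 i; fin_cases i <;> simp [mul_smul, hd, hd₁, hg₀]

theorem GeneralPosition.exists_smul_frame_extension_eq {p : Fin 5 → ℙ K (Fin 3 → K)}
    (hp : GeneralPosition p) :
    ∃ (g : (Fin 3 → K) ≃ₗ[K] (Fin 3 → K)) (z : Fin 3 → K) (hz : z ≠ 0),
      (∀ i, z i ≠ 0) ∧ Function.Injective z ∧
      p = g • ![basisPoint K 0, basisPoint K 1, basisPoint K 2, unitPoint K, mk K z hz] := by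
  obtain ⟨g, hg⟩ := (hp.comp (Fin.castSucc_injective 4)).exists_smul_frame_eq
  set q := ![basisPoint K 0, basisPoint K 1, basisPoint K 2, unitPoint K,
    mk K _ (g⁻¹ • p 4).rep_nonzero]
  have hpq : p = g • q := by
    ext1 i; fin_cases i
    · exact congrFun hg 0
    · exact congrFun hg 1
    · exact congrFun hg 2
    · exact congrFun hg 3
    · simp [q]
  have hq : GeneralPosition q := by simpa [hpq] using hp.smul g⁻¹
  have hq₄ : q ∘ ![0, 1, 2, 4] =
      ![basisPoint K 0, basisPoint K 1, basisPoint K 2, mk K _ (g⁻¹ • p 4).rep_nonzero] := by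
    ext1 i; fin_cases i <;> rfl
  have hz := hq.comp (f := ![0, 1, 2, 4]) (by decide)
  rw [hq₄] at hz
  exact ⟨g, _, _, hz.coord_ne_zero, hq.injective_of_frame, hpq⟩

end StandardFrame

section FieldOfFourElements

variable [Fintype F]

theorem two_eq_zero_of_card_eq_four (hF : Fintype.card F = 4) : (2 : F) = 0 := by
  have h4 : (2 : F) ^ 2 = 0 := by
    have := FiniteField.cast_card_eq_zero F
    rw [hF] at this
    linear_combination this
  exact pow_eq_zero_iff two_ne_zero |>.mp h4

theorem sq_add_self_add_one_eq_zero_of_card_eq_four (hF : Fintype.card F = 4) {t : F}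
    (ht₀ : t ≠ 0) (ht₁ : t ≠ 1) : t ^ 2 + t + 1 = 0 := by
  have h3 : t ^ 3 = 1 := by simpa [hF] using FiniteField.pow_card_sub_one_eq_one t ht₀
  have h : (t - 1) * (t ^ 2 + t + 1) = 0 := by linear_combination h3
  exact (mul_eq_zero.mp h).resolve_left (sub_ne_zero.mpr ht₁)

theorem eq_sq_of_card_eq_four (hF : Fintype.card F = 4) {t u : F} (ht₀ : t ≠ 0) (ht₁ : t ≠ 1)
    (hu₀ : u ≠ 0) (hu₁ : u ≠ 1) (hut : u ≠ t) : u = t ^ 2 := by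
  have ht := sq_add_self_add_one_eq_zero_of_card_eq_four hF ht₀ ht₁
  have hu := sq_add_self_add_one_eq_zero_of_card_eq_four hF hu₀ hu₁
  have h : (u - t) * (u + t + 1) = 0 := by linear_combination hu - ht
  linear_combination (mul_eq_zero.mp h).resolve_left (sub_ne_zero.mpr hut) - ht

theorem exists_mk_eq_mk_one_sq_of_card_eq_four (hF : Fintype.card F = 4) {z : Fin 3 → F}
    (hz : z ≠ 0) (hz₀ : ∀ i, z i ≠ 0) (hz_inj : Function.Injective z) :
    ∃ t : F, t ≠ 0 ∧ t ≠ 1 ∧ mk F z hz = mk F ![1, t, t ^ 2] (vec_ne_zero₀ F t (t ^ 2)) := by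
  have hne {i j : Fin 3} (h : i ≠ j) : z i / z 0 ≠ z j / z 0 :=
    fun h' => h (hz_inj ((div_left_inj' (hz₀ 0)).mp h'))
  have ht₁ : z 1 / z 0 ≠ 1 := by simpa [hz₀ 0] using hne (i := 1) (j := 0) (by decide)
  have hu₁ : z 2 / z 0 ≠ 1 := by simpa [hz₀ 0] using hne (i := 2) (j := 0) (by decide)
  have hu := eq_sq_of_card_eq_four hF (div_ne_zero (hz₀ 1) (hz₀ 0)) ht₁
    (div_ne_zero (hz₀ 2) (hz₀ 0)) hu₁ (hne (by decide))
  refine ⟨z 1 / z 0, div_ne_zero (hz₀ 1) (hz₀ 0), ht₁, ?_⟩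
  refine (mk_eq_mk_iff' F _ _ hz _).mpr ⟨z 0, ?_⟩
  rw [← hu]
  ext i; fin_cases i <;> simp [mul_div_cancel₀, hz₀ 0]

end FieldOfFourElements

section Conic

def conicPoints (t : F) : Fin 5 → ℙ F (Fin 3 → F) :=
  ![mk F ![1, t ^ 2, (t ^ 2) ^ 2] (vec_ne_zero₀ F _ _), mk F ![0, 0, 1] (vec_ne_zero₂ F),
    mk F ![1, 0, 0 ^ 2] (vec_ne_zero₀ F _ _), mk F ![1, t, t ^ 2] (vec_ne_zero₀ F _ _),
    mk F ![1, 1, 1 ^ 2] (vec_ne_zero₀ F _ _)]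

theorem conic_eq_range_conicPoints [Fintype F] (hF : Fintype.card F = 4) {t : F}
    (ht₀ : t ≠ 0) (ht₁ : t ≠ 1) : conic F = Set.range (conicPoints t) := by
  apply Set.Subset.antisymm
  · rintro _ (⟨s, rfl⟩ | rfl)
    · by_cases hs₀ : s = 0
      · exact ⟨2, by rw [hs₀]; rfl⟩
      by_cases hs₁ : s = 1
      · exact ⟨4, by rw [hs₁]; rfl⟩
      by_cases hst : s = t
      · exact ⟨3, by rw [hst]; rfl⟩
      · exact ⟨0, by rw [eq_sq_of_card_eq_four hF ht₀ ht₁ hs₀ hs₁ hst]; rfl⟩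
    · exact ⟨1, rfl⟩
  · rintro _ ⟨i, rfl⟩
    fin_cases i
    · exact Or.inl ⟨t ^ 2, rfl⟩
    · exact Or.inr rfl
    · exact Or.inl ⟨0, rfl⟩
    · exact Or.inl ⟨t, rfl⟩
    · exact Or.inl ⟨1, rfl⟩

def conicCollineation (t : F) : (Fin 3 → F) ≃ₗ[F] (Fin 3 → F) :=
  Matrix.SpecialLinearGroup.toLin'
    (⟨!![0, 1, 0; 0, t + 1, 1; 1, t, 0], by simp [Matrix.det_fin_three]⟩ :
      Matrix.SpecialLinearGroup (Fin 3) F)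

theorem conicCollineation_apply (t : F) (v : Fin 3 → F) :
    conicCollineation t v = ![v 1, (t + 1) * v 1 + v 2, v 0 + t * v 1] := by
  change Matrix.mulVec !![0, 1, 0; 0, t + 1, 1; 1, t, 0] v = _
  ext i; fin_cases i <;> simp [Matrix.mulVec, dotProduct, Fin.sum_univ_three]

theorem conicCollineation_smul_conicPoints (h2 : (2 : F) = 0) {t : F}
    (ht : t ^ 2 + t + 1 = 0) :
    conicCollineation t • conicPoints t = ![basisPoint F 0, basisPoint F 1, basisPoint F 2,
      unitPoint F, mk F ![1, t, t ^ 2] (vec_ne_zero₀ F _ _)] := by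
  have h3 : t ^ 3 = 1 := by linear_combination (t - 1) * ht
  ext1 i; fin_cases i
  on_goal 1 => apply smul_mk_eq_mk (a := t ^ 2)
  on_goal 2 => apply smul_mk_eq_mk (a := 1)
  on_goal 3 => apply smul_mk_eq_mk (a := 1)
  on_goal 4 => apply smul_mk_eq_mk (a := t)
  on_goal 5 => apply smul_mk_eq_mk (a := 1)
  all_goals
    rw [conicCollineation_apply]
    ext j; fin_cases j <;> simp <;> grind

end Conic

/-- Every oval of `PG(2, 4)` is a conic: up to the action of `PGL(3, 4)`, there is a
unique oval in `PG(2, 4)`, namely `{(1, t, t²) : t ∈ GF(4)} ∪ {(0, 0, 1)}`. -/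
theorem oval_of_pg2_4_is_conic [Fintype F] (hF : Fintype.card F = 4)
    (S : Set (ℙ F (Fin 3 → F))) (hS : IsOval F 4 S) :
    ∃ g : (Fin 3 → F) ≃ₗ[F] (Fin 3 → F),
      Projectivization.map g.toLinearMap g.injective '' conic F = S := by
  obtain ⟨p, hp, rfl⟩ := hS.exists_generalPosition_range_eq
  obtain ⟨g, z, hz, hz₀, hz_inj, rfl⟩ := hp.exists_smul_frame_extension_eq
  obtain ⟨t, ht₀, ht₁, hzt⟩ := exists_mk_eq_mk_one_sq_of_card_eq_four hF hz hz₀ hz_inj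
  have h2 := two_eq_zero_of_card_eq_four hF
  have ht := sq_add_self_add_one_eq_zero_of_card_eq_four hF ht₀ ht₁
  refine ⟨g * conicCollineation t, ?_⟩
  change (g * conicCollineation t) • conic F = _
  rw [conic_eq_range_conicPoints hF ht₀ ht₁, Set.smul_set_range, hzt,
    ← conicCollineation_smul_conicPoints h2 ht]
  simp only [mul_smul]
  rfl
end
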